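/- arXiv:2506.08447 — 5 statements merged into one kernel-verified Lean document; each statement's English description precedes it below -/
import Mathlib

section
/- Let k ∈ ℕ with k > 1, let a(x) = a_0 ∏_{i=1}^{k-1}(x + a_i) and b(x) = b_0 ∏_{i=1}^{k}(x + b_i) where a_0, b_0 > 0 and 0 < b_1 ≤ a_1 ≤ b_2 ≤ a_2 ≤ … ≤ a_{k-1} ≤ b_k with the a_i pairwise distinct and the b_j distinct from the a_i. Then the constant c = ∑_{i=1}^{k} b_i − ∑_{i=1}^{k-1} a_i is strictly positive, and for each i = 1, …, k−1 the constant A_i = ∏_{j=1}^{k}(b_j − a_i) / ∏_{j≠i, 1≤j≤k-1}(a_j − a_i) is strictly negative. -/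
/-- under the interlacing condition `b₁ ≤ a₁ ≤ b₂ ≤ a₂ ≤ … ≤ a_{k-1} ≤ b_k`
(with the `aᵢ` pairwise distinct and the `bⱼ` distinct from the `aᵢ`), the constant
`c = ∑ bⱼ − ∑ aᵢ` is strictly positive and each `Aᵢ` is strictly negative. -/
theorem coefficients_sign
    (k : ℕ) (hk : 1 < k) (a b : ℕ → ℝ)
    (ha0 : 0 < a 0) (hb0 : 0 < b 0)
    (hb1pos : 0 < b 1)
    (hinter : ∀ i ∈ Finset.Icc 1 (k - 1), b i ≤ a i ∧ a i ≤ b (i + 1))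
    (hadist : ∀ i ∈ Finset.Icc 1 (k - 1), ∀ j ∈ Finset.Icc 1 (k - 1), i ≠ j → a i ≠ a j)
    (hab : ∀ i ∈ Finset.Icc 1 (k - 1), ∀ j ∈ Finset.Icc 1 k, a i ≠ b j) :
    0 < (∑ j ∈ Finset.Icc 1 k, b j) - ∑ i ∈ Finset.Icc 1 (k - 1), a i ∧
      ∀ i ∈ Finset.Icc 1 (k - 1),
        (∏ j ∈ Finset.Icc 1 k, (b j - a i)) /
            (∏ j ∈ (Finset.Icc 1 (k - 1)).erase i, (a j - a i)) < 0 := by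
  have hmono : ∀ q, ∀ p, 1 ≤ p → p ≤ q → q ≤ k - 1 → a p ≤ a q := by
    intro q
    induction q with
    | zero => intro p h1 h2 _; omega
    | succ n ih =>
      intro p h1 h2 h3
      rcases eq_or_lt_of_le h2 with rfl | h
      · exact le_refl _
      · have h1n : 1 ≤ n := by omega
        have hn : n ∈ Finset.Icc 1 (k - 1) := Finset.mem_Icc.mpr ⟨h1n, by omega⟩
        have hn1 : n + 1 ∈ Finset.Icc 1 (k - 1) := Finset.mem_Icc.mpr ⟨by omega, h3⟩
        calc a p ≤ a n := ih p h1 (by omega) (by omega)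
          _ ≤ b (n + 1) := (hinter n hn).2
          _ ≤ a (n + 1) := (hinter (n + 1) hn1).1
  constructor
  · have hmap : Finset.Icc 2 k = (Finset.Icc 1 (k - 1)).map (addRightEmbedding 1) := by
      rw [Finset.map_add_right_Icc]
      congr 1
      omega
    have hsplit : Finset.Icc 1 k = insert 1 (Finset.Icc 2 k) := by
      ext j
      simp only [Finset.mem_Icc, Finset.mem_insert]
      omega
    rw [hsplit, Finset.sum_insert (by simp only [Finset.mem_Icc]; omega), hmap,
      Finset.sum_map]
    simp only [addRightEmbedding_apply]
    have key : ∑ x ∈ Finset.Icc 1 (k - 1), b (x + 1) - ∑ i ∈ Finset.Icc 1 (k - 1), a i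
        = ∑ x ∈ Finset.Icc 1 (k - 1), (b (x + 1) - a x) := by
      rw [Finset.sum_sub_distrib]
    have hnn : 0 ≤ ∑ x ∈ Finset.Icc 1 (k - 1), (b (x + 1) - a x) :=
      Finset.sum_nonneg fun x hx => sub_nonneg.mpr (hinter x hx).2
    linarith
  · intro i hi
    obtain ⟨hi1, hik⟩ := Finset.mem_Icc.mp hi
    -- strict sign facts for the numerator factors
    have hneg : ∀ j ∈ Finset.Ioc 0 i, 0 < a i - b j := by
      intro j hj
      obtain ⟨hj0, hji⟩ := Finset.mem_Ioc.mp hj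
      have hjk : j ≤ k - 1 := le_trans hji hik
      have h1 : b j ≤ a j := (hinter j (Finset.mem_Icc.mpr ⟨hj0, hjk⟩)).1
      have h2 : a j ≤ a i := hmono i j hj0 hji hik
      have h3 : a i ≠ b j := hab i hi j (Finset.mem_Icc.mpr ⟨hj0, by omega⟩)
      have h4 : b j < a i := lt_of_le_of_ne (le_trans h1 h2) (Ne.symm h3)
      linarith
    have hpos : ∀ j ∈ Finset.Ioc i k, 0 < b j - a i := by
      intro j hj
      obtain ⟨hji, hjk⟩ := Finset.mem_Ioc.mp hj
      have hle : a i ≤ b j := by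
        have h1 : a i ≤ a (j - 1) := hmono (j - 1) i hi1 (by omega) (by omega)
        have h2 : a (j - 1) ≤ b (j - 1 + 1) :=
          (hinter (j - 1) (Finset.mem_Icc.mpr ⟨by omega, by omega⟩)).2
        have h3 : j - 1 + 1 = j := by omega
        rw [h3] at h2
        linarith
      have h3 : a i ≠ b j := hab i hi j (Finset.mem_Icc.mpr ⟨by omega, hjk⟩)
      have h4 : a i < b j := lt_of_le_of_ne hle h3
      linarith
    -- strict sign facts for the denominator factors
    have hdneg : ∀ j ∈ Finset.Ioc 0 (i - 1), 0 < a i - a j := by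
      intro j hj
      obtain ⟨hj0, hji⟩ := Finset.mem_Ioc.mp hj
      have h1 : a j ≤ a i := hmono i j hj0 (by omega) hik
      have h2 : a j ≠ a i := hadist j (Finset.mem_Icc.mpr ⟨hj0, by omega⟩) i hi (by omega)
      have h3 : a j < a i := lt_of_le_of_ne h1 h2
      linarith
    have hdpos : ∀ j ∈ Finset.Ioc i (k - 1), 0 < a j - a i := by
      intro j hj
      obtain ⟨hji, hjk⟩ := Finset.mem_Ioc.mp hj
      have h1 : a i ≤ a j := hmono j i hi1 (by omega) hjk
      have h2 : a i ≠ a j := hadist i hi j (Finset.mem_Icc.mpr ⟨by omega, hjk⟩) (by omega)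
      have h3 : a i < a j := lt_of_le_of_ne h1 h2
      linarith
    -- split the numerator product
    have hIcc : Finset.Icc 1 k = Finset.Ioc 0 k := by
      ext j; simp only [Finset.mem_Icc, Finset.mem_Ioc]; omega
    have hprodsplit : (∏ j ∈ Finset.Icc 1 k, (b j - a i))
        = (∏ j ∈ Finset.Ioc 0 i, (b j - a i)) * ∏ j ∈ Finset.Ioc i k, (b j - a i) := by
      rw [hIcc]
      exact (Finset.prod_Ioc_consecutive _ (Nat.zero_le i) (by omega)).symm
    -- split the denominator product
    have herase : (Finset.Icc 1 (k - 1)).erase i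
        = Finset.Ioc 0 (i - 1) ∪ Finset.Ioc i (k - 1) := by
      ext j
      simp only [Finset.mem_erase, Finset.mem_Icc, Finset.mem_Ioc, Finset.mem_union]
      omega
    have hdisj : Disjoint (Finset.Ioc 0 (i - 1)) (Finset.Ioc i (k - 1)) := by
      rw [Finset.disjoint_left]
      intro j hj hj'
      simp only [Finset.mem_Ioc] at hj hj'
      omega
    have hdsplit : (∏ j ∈ (Finset.Icc 1 (k - 1)).erase i, (a j - a i))
        = (∏ j ∈ Finset.Ioc 0 (i - 1), (a j - a i))
          * ∏ j ∈ Finset.Ioc i (k - 1), (a j - a i) := by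
      rw [herase, Finset.prod_union hdisj]
    -- extract signs
    have negprod : ∀ (s : Finset ℕ) (f : ℕ → ℝ),
        (∏ j ∈ s, (-(f j))) = (-1 : ℝ) ^ s.card * ∏ j ∈ s, f j := by
      intro s f
      rw [← Finset.prod_const, ← Finset.prod_mul_distrib]
      simp [neg_one_mul]
    have hN1 : (∏ j ∈ Finset.Ioc 0 i, (b j - a i))
        = (-1 : ℝ) ^ i * ∏ j ∈ Finset.Ioc 0 i, (a i - b j) := by
      have : (∏ j ∈ Finset.Ioc 0 i, (b j - a i))
          = ∏ j ∈ Finset.Ioc 0 i, (-(a i - b j)) := by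
        apply Finset.prod_congr rfl
        intro j _
        ring
      rw [this, negprod]
      simp [Nat.card_Ioc]
    have hD1 : (∏ j ∈ Finset.Ioc 0 (i - 1), (a j - a i))
        = (-1 : ℝ) ^ (i - 1) * ∏ j ∈ Finset.Ioc 0 (i - 1), (a i - a j) := by
      have : (∏ j ∈ Finset.Ioc 0 (i - 1), (a j - a i))
          = ∏ j ∈ Finset.Ioc 0 (i - 1), (-(a i - a j)) := by
        apply Finset.prod_congr rfl
        intro j _
        ring
      rw [this, negprod]
      simp [Nat.card_Ioc]
    have hP : 0 < ∏ j ∈ Finset.Ioc 0 i, (a i - b j) := Finset.prod_pos hneg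
    have hN2 : 0 < ∏ j ∈ Finset.Ioc i k, (b j - a i) := Finset.prod_pos hpos
    have hR : 0 < ∏ j ∈ Finset.Ioc 0 (i - 1), (a i - a j) := Finset.prod_pos hdneg
    have hD2 : 0 < ∏ j ∈ Finset.Ioc i (k - 1), (a j - a i) := Finset.prod_pos hdpos
    rw [hprodsplit, hdsplit, hN1, hD1]
    have hpow : (-1 : ℝ) ^ i = (-1 : ℝ) ^ (i - 1) * (-1) := by
      rw [← pow_succ]
      congr 1
      omega
    rw [hpow]
    set e := (-1 : ℝ) ^ (i - 1) with he
    have hene : e ≠ 0 := pow_ne_zero _ (by norm_num)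
    rcases hene.lt_or_gt with hlt | hgt
    · apply div_neg_of_pos_of_neg
      · exact mul_pos (mul_pos (by linarith) hP) hN2
      · exact mul_neg_of_neg_of_pos (mul_neg_of_neg_of_pos hlt hR) hD2
    · apply div_neg_of_neg_of_pos
      · exact mul_neg_of_neg_of_pos (mul_neg_of_neg_of_pos (by linarith) hP) hN2
      · exact mul_pos (mul_pos hgt hR) hD2
end

section
/- Let a > 0, let A ≤ 0 be real, and let t ∈ (0,1). Then the sequence m ↦ t^{A/(m+a)} (m ∈ ℤ₊) is a Hausdorff moment sequence; explicitly, t^{A/(m+a)} = ∫_{[0,1]} s^m dμ_t(s) where μ_t = δ_1 + w(s,t) ds and w(s,t) = s^{a−1} ∑_{j=1}^{∞} (A log t)^j (−log s)^{j−1} / ((j−1)! j!) is a nonnegative function of s ∈ (0,1). -/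
open MeasureTheory

/-- A sequence is a Hausdorff moment sequence. -/
def IsHausdorffMoment (β : ℕ → ℝ) : Prop :=
  ∃ μ : Measure ℝ, IsFiniteMeasure μ ∧ μ (Set.Icc (0 : ℝ) 1)ᶜ = 0 ∧
    ∀ m : ℕ, β m = ∫ s in Set.Icc (0 : ℝ) 1, s ^ m ∂μ

/-- The weight function `w(s,t) = s^{a-1} ∑_{j=1}^∞ (A log t)^j (−log s)^{j−1}/((j−1)! j!)`. -/
noncomputable def weightW (a A t : ℝ) (s : ℝ) : ℝ :=
  s ^ (a - 1) * ∑' j : ℕ,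
    (A * Real.log t) ^ (j + 1) * (-Real.log s) ^ j /
      ((Nat.factorial j : ℝ) * (Nat.factorial (j + 1)))

open Set Filter
open scoped NNReal ENNReal

lemma summable_aux (c x : ℝ) :
    Summable (fun j : ℕ => c ^ (j+1) * x ^ j / ((j.factorial : ℝ) * (j+1).factorial)) := by
  apply Summable.of_norm
  refine Summable.of_nonneg_of_le (fun j => norm_nonneg _) (fun j => ?_)
    (((Real.summable_pow_div_factorial (|c| * |x|))).mul_left |c|)
  have h1 : (0:ℝ) < j.factorial := by positivity
  have h2 : (1:ℝ) ≤ (j+1).factorial := by exact_mod_cast Nat.one_le_iff_ne_zero.2 (Nat.factorial_ne_zero _)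
  rw [Real.norm_eq_abs, abs_div, abs_mul, abs_pow, abs_pow]
  rw [abs_of_pos (by positivity : (0:ℝ) < (j.factorial : ℝ) * (j+1).factorial)]
  calc |c| ^ (j+1) * |x| ^ j / ((j.factorial : ℝ) * (j+1).factorial)
      ≤ |c| ^ (j+1) * |x| ^ j / ((j.factorial : ℝ) * 1) := by
        gcongr
    _ = |c| * ((|c| * |x|) ^ j / j.factorial) := by
        rw [mul_one, pow_succ, mul_pow]
        ring

lemma measurable_weightW (a A t : ℝ) : Measurable (weightW a A t) := by
  apply Measurable.mul
  · measurability
  · apply measurable_of_tendsto_metrizable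
      (f := fun n s => ∑ j ∈ Finset.range n,
        (A * Real.log t) ^ (j + 1) * (-Real.log s) ^ j /
          ((Nat.factorial j : ℝ) * (Nat.factorial (j + 1))))
    · intro n
      apply Finset.measurable_sum
      intro j _
      apply Measurable.div
      · exact (Real.measurable_log.neg.pow_const j).const_mul _
      · exact measurable_const
    · rw [tendsto_pi_nhds]
      intro s
      exact (summable_aux (A * Real.log t) (-Real.log s)).hasSum.tendsto_sum_nat

lemma image_exp_neg : (fun x : ℝ => Real.exp (-x)) '' (Set.Ioi 0) = Set.Ioo 0 1 := by
  ext s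
  constructor
  · rintro ⟨x, hx, rfl⟩
    simp only [Set.mem_Ioi] at hx
    exact ⟨Real.exp_pos _, by rw [Real.exp_lt_one_iff]; linarith⟩
  · intro hs
    refine ⟨-Real.log s, ?_, by simp [Real.exp_log hs.1]⟩
    simpa using neg_pos.2 (Real.log_neg hs.1 hs.2)

lemma key_int (b : ℝ) (hb : 0 < b) (j : ℕ) :
    IntegrableOn (fun s => s ^ (b-1) * (-Real.log s) ^ j) (Set.Ioo 0 1) ∧
    ∫ s in Set.Ioo (0:ℝ) 1, s ^ (b-1) * (-Real.log s) ^ j = j.factorial / b ^ (j+1) := by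
  set g : ℝ → ℝ := fun s => s ^ (b-1) * (-Real.log s) ^ j with hg
  have hderiv : ∀ x ∈ Set.Ioi (0:ℝ),
      HasDerivWithinAt (fun x => Real.exp (-x)) (-Real.exp (-x)) (Set.Ioi 0) x := by
    intro x _
    have := (Real.hasDerivAt_exp (-x)).comp x (hasDerivAt_neg x)
    simpa [mul_comm, Function.comp_def] using this.hasDerivWithinAt
  have hinj : Set.InjOn (fun x : ℝ => Real.exp (-x)) (Set.Ioi 0) :=
    fun x _ y _ h => neg_injective (Real.exp_injective h)
  have heq : Set.EqOn (fun x => |(-Real.exp (-x))| • g (Real.exp (-x)))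
      (fun x => x ^ (j:ℝ) * Real.exp (-(b*x))) (Set.Ioi 0) := by
    intro x hx
    simp only [Set.mem_Ioi] at hx
    have h1 : |(-Real.exp (-x))| = Real.exp (-x) := by
      rw [abs_neg, abs_of_pos (Real.exp_pos _)]
    have h2 : (Real.exp (-x)) ^ (b-1) = Real.exp (-x * (b-1)) := by
      rw [Real.rpow_def_of_pos (Real.exp_pos _), Real.log_exp]
    have h3 : x ^ (j:ℝ) = x ^ j := Real.rpow_natCast x j
    simp only [hg, smul_eq_mul, h1, h2, Real.log_exp, neg_neg, h3]
    rw [← mul_assoc, ← Real.exp_add]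
    ring_nf
  have hint : IntegrableOn (fun x => x ^ (j:ℝ) * Real.exp (-(b*x))) (Set.Ioi 0) := by
    have := integrableOn_rpow_mul_exp_neg_mul_rpow
      (by exact_mod_cast neg_one_lt_zero.trans_le (Nat.cast_nonneg j) : (-1:ℝ) < (j:ℝ))
      (zero_lt_one : (0:ℝ) < 1) hb
    apply this.congr_fun ?_ measurableSet_Ioi
    intro x hx
    simp [Real.rpow_one, neg_mul]
  have hIcc : IntegrableOn g (Set.Ioo 0 1) := by
    rw [← image_exp_neg,
      integrableOn_image_iff_integrableOn_abs_deriv_smul measurableSet_Ioi hderiv hinj]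
    exact hint.congr_fun (fun x hx => (heq hx).symm) measurableSet_Ioi
  refine ⟨hIcc, ?_⟩
  rw [← image_exp_neg,
    integral_image_eq_integral_abs_deriv_smul measurableSet_Ioi hderiv hinj,
    setIntegral_congr_fun measurableSet_Ioi heq]
  have hGamma := Real.integral_rpow_mul_exp_neg_mul_Ioi
    (by positivity : (0:ℝ) < (j:ℝ)+1) hb
  have hcast : ((j:ℝ)+1) - 1 = (j:ℝ) := by ring
  rw [hcast] at hGamma
  rw [hGamma, Real.Gamma_nat_eq_factorial]
  rw [show ((j:ℝ)+1) = ((j+1 : ℕ):ℝ) by push_cast; ring, Real.rpow_natCast]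
  rw [div_pow, one_pow]
  ring

lemma weightW_nonneg {a A t : ℝ} (hA : A ≤ 0) (ht : t ∈ Set.Ioo (0:ℝ) 1)
    {s : ℝ} (hs : s ∈ Set.Ioo (0:ℝ) 1) : 0 ≤ weightW a A t s := by
  have hc : 0 ≤ A * Real.log t := by nlinarith [Real.log_nonpos ht.1.le ht.2.le]
  have hx : 0 ≤ -Real.log s := by simpa using (Real.log_nonpos hs.1.le hs.2.le)
  apply mul_nonneg (Real.rpow_nonneg hs.1.le _)
  apply tsum_nonneg
  intro j
  positivity

lemma summable_shift (y : ℝ) :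
    Summable (fun j : ℕ => y ^ (j+1) / (((j+1).factorial : ℝ))) := by
  have := (Real.summable_pow_div_factorial y).comp_injective (add_left_injective 1)
  simpa [Function.comp_def] using this

lemma tsum_shift (y : ℝ) :
    ∑' j : ℕ, y ^ (j+1) / (((j+1).factorial : ℝ)) = Real.exp y - 1 := by
  have hexp : Real.exp y = ∑' n : ℕ, y ^ n / (n.factorial : ℝ) := by
    rw [Real.exp_eq_exp_ℝ, NormedSpace.exp_eq_tsum_div]
  have := Summable.tsum_eq_zero_add (Real.summable_pow_div_factorial y)
  rw [← hexp] at this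
  simp only [pow_zero, Nat.factorial_zero, Nat.cast_one, div_one] at this
  linarith [this]

lemma moment_core (a A t : ℝ) (ha : 0 < a) (hA : A ≤ 0) (ht : t ∈ Set.Ioo (0:ℝ) 1) (m : ℕ) :
    IntegrableOn (fun s => s ^ m * weightW a A t s) (Set.Ioo 0 1) ∧
    (∫ s in Set.Ioo (0:ℝ) 1, s ^ m * weightW a A t s
      = Real.exp ((A * Real.log t) / ((m:ℝ) + a)) - 1) ∧
    (∫⁻ s in Set.Ioo (0:ℝ) 1, ENNReal.ofReal (s ^ m * weightW a A t s)
      = ENNReal.ofReal (Real.exp ((A * Real.log t) / ((m:ℝ) + a)) - 1)) := by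
  set c : ℝ := A * Real.log t with hcdef
  set b : ℝ := (m:ℝ) + a with hbdef
  have hb : 0 < b := by positivity
  have hc : 0 ≤ c := by rw [hcdef]; nlinarith [Real.log_nonpos ht.1.le ht.2.le]
  set G : ℕ → ℝ → ℝ := fun j s =>
    s ^ (b-1) * (c ^ (j+1) * (-Real.log s) ^ j / ((j.factorial : ℝ) * (j+1).factorial)) with hGdef
  -- rewrite G j as constant * key integrand
  have hGconst : ∀ j : ℕ, G j = fun s =>
      (c ^ (j+1) / ((j.factorial : ℝ) * (j+1).factorial)) * (s ^ (b-1) * (-Real.log s) ^ j) := by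
    intro j; funext s; simp only [hGdef]; ring
  have hGint : ∀ j : ℕ, IntegrableOn (G j) (Set.Ioo 0 1) := by
    intro j; rw [hGconst j]; exact ((key_int b hb j).1).const_mul _
  set v : ℕ → ℝ := fun j => (c/b) ^ (j+1) / (((j+1).factorial : ℝ)) with hvdef
  have hGval : ∀ j : ℕ, ∫ s in Set.Ioo (0:ℝ) 1, G j s = v j := by
    intro j
    rw [hGconst j, integral_const_mul, (key_int b hb j).2, hvdef]
    have h1 : (j.factorial : ℝ) ≠ 0 := by positivity
    have h2 : ((j+1).factorial : ℝ) ≠ 0 := by positivity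
    have h3 : b ^ (j+1) ≠ 0 := by positivity
    have h4 : b ≠ 0 := hb.ne'
    field_simp [div_pow]
    have e : b⁻¹ ^ j * b ^ j = 1 := by rw [← mul_pow, inv_mul_cancel₀ h4, one_pow]
    have e2 : b * b⁻¹ = 1 := mul_inv_cancel₀ h4
    linear_combination (-(c*c^j)) * (b^j*b⁻¹^j) * e2 + (-(c*c^j)) * e
  have hGnonneg : ∀ j : ℕ, ∀ s ∈ Set.Ioo (0:ℝ) 1, 0 ≤ G j s := by
    intro j s hs
    have hx : 0 ≤ -Real.log s := by simpa using (Real.log_nonpos hs.1.le hs.2.le)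
    have := hs.1.le
    simp only [hGdef]
    positivity
  have m1 : Measurable fun s : ℝ => s ^ (b-1) := by measurability
  have hGmeas : ∀ j : ℕ, Measurable (G j) := by
    intro j
    simp only [hGdef]
    exact m1.mul (((Real.measurable_log.neg.pow_const j).const_mul _).div_const _)
  -- pointwise identity on Ioo
  have hpt : ∀ s ∈ Set.Ioo (0:ℝ) 1, s ^ m * weightW a A t s = ∑' j : ℕ, G j s := by
    intro s hs
    have h1 : (s:ℝ) ^ m * s ^ (a-1) = s ^ (b-1) := by
      rw [← Real.rpow_natCast s m, ← Real.rpow_add hs.1]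
      congr 1
      rw [hbdef]; ring
    calc s ^ m * weightW a A t s
        = (s ^ m * s ^ (a-1)) * ∑' j : ℕ,
            c ^ (j+1) * (-Real.log s) ^ j / ((j.factorial : ℝ) * (j+1).factorial) := by
          rw [weightW, mul_assoc]
      _ = ∑' j : ℕ, G j s := by
          rw [h1, ← tsum_mul_left]
  have hHnonneg : ∀ s ∈ Set.Ioo (0:ℝ) 1, 0 ≤ s ^ m * weightW a A t s := by
    intro s hs
    exact mul_nonneg (pow_nonneg hs.1.le m) (weightW_nonneg hA ht hs)
  -- the lintegral computation
  have hsum_v : Summable v := summable_shift (c/b)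
  have hv_nonneg : ∀ j, 0 ≤ v j := by
    intro j
    have : 0 ≤ c / b := div_nonneg hc hb.le
    positivity
  have hlint : ∫⁻ s in Set.Ioo (0:ℝ) 1, ENNReal.ofReal (s ^ m * weightW a A t s)
      = ENNReal.ofReal (Real.exp (c/b) - 1) := by
    rw [setLIntegral_congr_fun_ae measurableSet_Ioo
      (ae_of_all _ (fun s hs => by
        rw [hpt s hs,
          ENNReal.ofReal_tsum_of_nonneg (fun j => hGnonneg j s hs)
            (by
              have := (summable_aux c (-Real.log s)).mul_left (s ^ (b-1) : ℝ)
              simpa [hGdef, mul_div_assoc] using this)] ))]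
    rw [lintegral_tsum (fun j => ((hGmeas j).ennreal_ofReal).aemeasurable)]
    have heach : ∀ j : ℕ, ∫⁻ s in Set.Ioo (0:ℝ) 1, ENNReal.ofReal (G j s)
        = ENNReal.ofReal (v j) := by
      intro j
      rw [← ofReal_integral_eq_lintegral_ofReal (hGint j)
        ((ae_restrict_iff' measurableSet_Ioo).2 (ae_of_all _ (fun s hs => hGnonneg j s hs)))]
      rw [hGval j]
    simp_rw [heach]
    rw [← ENNReal.ofReal_tsum_of_nonneg hv_nonneg hsum_v]
    congr 1
    simpa [hvdef] using tsum_shift (c/b)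
  have hmeasH : Measurable (fun s : ℝ => s ^ m * weightW a A t s) :=
    (measurable_id.pow_const m).mul (measurable_weightW a A t)
  have hHnonneg_ae : 0 ≤ᵐ[volume.restrict (Set.Ioo (0:ℝ) 1)]
      (fun s : ℝ => s ^ m * weightW a A t s) :=
    (ae_restrict_iff' measurableSet_Ioo).2 (ae_of_all _ hHnonneg)
  have hHint : IntegrableOn (fun s => s ^ m * weightW a A t s) (Set.Ioo 0 1) := by
    refine ⟨hmeasH.aestronglyMeasurable, ?_⟩
    rw [hasFiniteIntegral_iff_ofReal hHnonneg_ae, hlint]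
    exact ENNReal.ofReal_lt_top
  refine ⟨hHint, ?_, hlint⟩
  rw [integral_eq_lintegral_of_nonneg_ae hHnonneg_ae hmeasH.aestronglyMeasurable, hlint,
    ENNReal.toReal_ofReal]
  have : 1 ≤ Real.exp (c/b) := Real.one_le_exp (div_nonneg hc hb.le)
  linarith

/-- for `a > 0`, `A ≤ 0`, `t ∈ (0,1)`, the sequence `m ↦ t^{A/(m+a)}` is a
Hausdorff moment sequence, explicitly represented by the measure `δ₁ + w(s,t) ds` with `w ≥ 0`. -/
theorem hausdorff_moment_of_exp_reciprocal
    (a A t : ℝ) (ha : 0 < a) (hA : A ≤ 0) (ht : t ∈ Set.Ioo (0 : ℝ) 1) :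
    (∀ s ∈ Set.Ioo (0 : ℝ) 1, 0 ≤ weightW a A t s) ∧
    (∀ m : ℕ, t ^ (A / ((m : ℝ) + a)) =
      ∫ s in Set.Icc (0 : ℝ) 1, s ^ m
        ∂(Measure.dirac (1 : ℝ) +
          (volume.restrict (Set.Ioo (0 : ℝ) 1)).withDensity
            (fun s => ENNReal.ofReal (weightW a A t s)))) ∧
    IsHausdorffMoment (fun m : ℕ => t ^ (A / ((m : ℝ) + a))) := by
  classical
  set w : ℝ → ℝ := weightW a A t with hw
  set μ₂ : Measure ℝ := (volume.restrict (Set.Ioo (0 : ℝ) 1)).withDensity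
      (fun s => ENNReal.ofReal (w s)) with hμ₂
  have hwmeas : Measurable w := measurable_weightW a A t
  have hwae : ∀ᵐ s ∂(volume.restrict (Set.Ioo (0:ℝ) 1)), 0 ≤ w s :=
    (ae_restrict_iff' measurableSet_Ioo).2 (ae_of_all _ (fun s hs => weightW_nonneg hA ht hs))
  -- restriction computations
  have hres2 : μ₂.restrict (Set.Icc (0:ℝ) 1) = μ₂ := by
    rw [hμ₂, restrict_withDensity measurableSet_Icc,
      Measure.restrict_restrict measurableSet_Icc,
      Set.inter_eq_self_of_subset_right Set.Ioo_subset_Icc_self]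
  have hres1 : (Measure.dirac (1:ℝ)).restrict (Set.Icc (0:ℝ) 1) = Measure.dirac 1 := by
    rw [restrict_dirac]
    simp [Set.mem_Icc, zero_le_one]
  -- the moment identity
  have hmoment : ∀ m : ℕ, t ^ (A / ((m : ℝ) + a)) =
      ∫ s in Set.Icc (0 : ℝ) 1, s ^ m ∂(Measure.dirac (1 : ℝ) + μ₂) := by
    intro m
    have hb : (0:ℝ) < (m:ℝ) + a := by positivity
    rw [Measure.restrict_add, hres1, hres2]
    -- integrability wrt μ₂
    have hint2 : Integrable (fun s : ℝ => s ^ m) μ₂ := by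
      rw [hμ₂, integrable_withDensity_iff hwmeas.ennreal_ofReal
        (ae_of_all _ (fun s => ENNReal.ofReal_lt_top))]
      apply ((moment_core a A t ha hA ht m).1).congr
      filter_upwards [hwae] with s hs
      rw [ENNReal.toReal_ofReal hs]
    have hint1 : Integrable (fun s : ℝ => s ^ m) (Measure.dirac (1:ℝ)) := by
      refine ⟨(measurable_id.pow_const m).aestronglyMeasurable, ?_⟩
      simp [HasFiniteIntegral, lintegral_dirac]
    rw [integral_add_measure hint1 hint2]
    rw [integral_dirac (fun s : ℝ => s ^ m) 1, one_pow]
    have hdens : (fun s => ENNReal.ofReal (w s)) =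
        fun s => ((Real.toNNReal (w s) : ℝ≥0) : ℝ≥0∞) := rfl
    rw [hμ₂, hdens, integral_withDensity_eq_integral_smul hwmeas.real_toNNReal]
    have : ∫ s in Set.Ioo (0:ℝ) 1, (Real.toNNReal (w s)) • (s ^ m)
        = ∫ s in Set.Ioo (0:ℝ) 1, s ^ m * w s := by
      apply integral_congr_ae
      filter_upwards [hwae] with s hs
      simp [NNReal.smul_def, Real.coe_toNNReal _ hs, mul_comm]
    rw [this, (moment_core a A t ha hA ht m).2.1]
    rw [Real.rpow_def_of_pos ht.1,
      show Real.log t * (A / ((m:ℝ) + a)) = (A * Real.log t) / ((m:ℝ) + a) by ring]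
    ring
  refine ⟨fun s hs => weightW_nonneg hA ht hs, hmoment, ?_⟩
  refine ⟨Measure.dirac 1 + μ₂, ?_, ?_, fun m => hmoment m⟩
  · constructor
    rw [Measure.add_apply]
    have h2 : μ₂ Set.univ < ⊤ := by
      rw [hμ₂, withDensity_apply _ MeasurableSet.univ, Measure.restrict_univ]
      have := (moment_core a A t ha hA ht 0).2.2
      simp only [pow_zero, one_mul] at this
      rw [this]
      exact ENNReal.ofReal_lt_top
    exact ENNReal.add_lt_top.2 ⟨measure_lt_top _ _, h2⟩
  · rw [Measure.add_apply]
    have h1 : Measure.dirac (1:ℝ) (Set.Icc (0:ℝ) 1)ᶜ = 0 := by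
      rw [Measure.dirac_apply' _ measurableSet_Icc.compl]
      simp [Set.indicator_apply, Set.mem_Icc, zero_le_one]
    have h2 : μ₂ (Set.Icc (0:ℝ) 1)ᶜ = 0 := by
      rw [hμ₂, withDensity_apply _ measurableSet_Icc.compl,
        Measure.restrict_restrict measurableSet_Icc.compl]
      have : (Set.Icc (0:ℝ) 1)ᶜ ∩ Set.Ioo (0:ℝ) 1 = ∅ := by
        rw [Set.eq_empty_iff_forall_notMem]
        rintro x ⟨hx1, hx2⟩
        exact hx1 (Set.Ioo_subset_Icc_self hx2)
      rw [this]
      simp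
    rw [h1, h2, add_zero]
end

section
/- Let k ∈ ℕ with k > 1, let a(x) = a_0 ∏_{i=1}^{k-1}(x + a_i) and b(x) = b_0 ∏_{i=1}^{k}(x + b_i) where a_0, b_0 > 0, the numbers a_1, …, a_{k-1}, b_1, …, b_k are distinct positive reals, and b_1 ≤ a_1 ≤ b_2 ≤ a_2 ≤ … ≤ a_{k-1} ≤ b_k. Then for every t ∈ (0,1), the sequence m ↦ t^{b(m)/a(m)} (m ∈ ℤ₊) is a Hausdorff moment sequence. -/
open MeasureTheory

/-- Auxiliary variant with integral over the whole line. -/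
def IsHM (β : ℕ → ℝ) : Prop :=
  ∃ μ : Measure ℝ, IsFiniteMeasure μ ∧ μ (Set.Icc (0 : ℝ) 1)ᶜ = 0 ∧
    ∀ m : ℕ, β m = ∫ s, s ^ m ∂μ

lemma IsHM.toHausdorff {β : ℕ → ℝ} (h : IsHM β) : IsHausdorffMoment β := by
  obtain ⟨μ, hfin, hnull, hmom⟩ := h
  refine ⟨μ, hfin, hnull, fun m => ?_⟩
  rw [hmom m]
  have : μ.restrict (Set.Icc (0:ℝ) 1) = μ :=
    Measure.restrict_eq_self_of_ae_mem (mem_ae_iff.2 hnull)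
  rw [show (∫ s in Set.Icc (0:ℝ) 1, s ^ m ∂μ) = ∫ s, s ^ m ∂(μ.restrict (Set.Icc (0:ℝ) 1)) from rfl, this]

lemma isHM_geom {C r : ℝ} (hC : 0 ≤ C) (hr : r ∈ Set.Icc (0:ℝ) 1) :
    IsHM (fun m => C * r ^ m) := by
  refine ⟨(ENNReal.ofReal C) • Measure.dirac r, ?_, ?_, ?_⟩
  · constructor
    simp [ENNReal.ofReal_lt_top, ENNReal.mul_lt_top, measure_lt_top]
  · simp [Measure.smul_apply, Measure.dirac_apply' _ (measurableSet_Icc.compl), hr]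
  · intro m
    rw [integral_smul_measure, integral_dirac]
    simp [ENNReal.toReal_ofReal hC]

lemma IsHM.mul {β γ : ℕ → ℝ} (hβ : IsHM β) (hγ : IsHM γ) :
    IsHM (fun m => β m * γ m) := by
  obtain ⟨μ, hμfin, hμn, hμm⟩ := hβ
  obtain ⟨ν, hνfin, hνn, hνm⟩ := hγ
  set f : ℝ × ℝ → ℝ := fun p => p.1 * p.2 with hf
  have hfm : Measurable f := measurable_fst.mul measurable_snd
  refine ⟨Measure.map f (μ.prod ν), ?_, ?_, ?_⟩
  · constructor
    rw [Measure.map_apply hfm MeasurableSet.univ]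
    exact lt_of_le_of_lt (measure_mono (Set.subset_univ _)) (measure_lt_top _ _)
  · rw [Measure.map_apply hfm (measurableSet_Icc.compl)]
    refine measure_mono_null (t := (Set.Icc (0:ℝ) 1 ×ˢ Set.Icc (0:ℝ) 1)ᶜ) ?_ ?_
    · intro p hp
      simp only [Set.mem_preimage, Set.mem_compl_iff, Set.mem_prod, Set.mem_Icc] at *
      intro hmem
      exact hp ⟨mul_nonneg hmem.1.1 hmem.2.1, mul_le_one₀ hmem.1.2 hmem.2.1 hmem.2.2⟩
    · rw [Set.compl_prod_eq_union]
      refine measure_union_null ?_ ?_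
      · rw [Measure.prod_prod, hμn, zero_mul]
      · rw [Measure.prod_prod, hνn, mul_zero]
  · intro m
    rw [integral_map hfm.aemeasurable]
    · have : ∀ p : ℝ × ℝ, (f p) ^ m = p.1 ^ m * p.2 ^ m := by
        intro p; simp [hf, mul_pow]
      simp_rw [this]
      rw [integral_prod_mul (fun s : ℝ => s ^ m) (fun s : ℝ => s ^ m)]
      rw [hμm m, hνm m]
    · exact (continuous_pow m).aestronglyMeasurable

lemma IsHM.tsum {β : ℕ → ℕ → ℝ} (h : ∀ n, IsHM (β n))
    (hsum : Summable fun n => β n 0) :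
    IsHM (fun m => ∑' n, β n m) := by
  choose μ hfin hnull hmom using h
  have hnn : ∀ n, 0 ≤ β n 0 := by
    intro n
    rw [hmom n 0]
    simp only [pow_zero, integral_const, smul_eq_mul, mul_one]
    positivity
  have hmass : ∀ n, μ n Set.univ = ENNReal.ofReal (β n 0) := by
    intro n
    have h0 := hmom n 0
    simp only [pow_zero, integral_const, smul_eq_mul, mul_one] at h0
    rw [h0, measureReal_def, ENNReal.ofReal_toReal (measure_ne_top _ _)]
  have hsumnull : (Measure.sum μ) (Set.Icc (0:ℝ) 1)ᶜ = 0 := by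
    rw [Measure.sum_apply _ measurableSet_Icc.compl]
    simp [hnull]
  have hsumfin : IsFiniteMeasure (Measure.sum μ) := by
    constructor
    rw [Measure.sum_apply _ MeasurableSet.univ]
    simp_rw [hmass]
    rw [← ENNReal.ofReal_tsum_of_nonneg hnn hsum]
    exact ENNReal.ofReal_lt_top
  refine ⟨Measure.sum μ, hsumfin, hsumnull, fun m => ?_⟩
  have hint : Integrable (fun s : ℝ => s ^ m) (Measure.sum μ) := by
    refine Integrable.mono' (integrable_const 1) ((continuous_pow m).aestronglyMeasurable) ?_
    have hae : ∀ᵐ s ∂(Measure.sum μ), s ∈ Set.Icc (0:ℝ) 1 := mem_ae_iff.2 hsumnull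
    filter_upwards [hae] with s hs
    rw [Real.norm_eq_abs, abs_of_nonneg (pow_nonneg hs.1 m)]
    exact pow_le_one₀ hs.1 hs.2
  rw [integral_sum_measure hint]
  exact tsum_congr fun n => hmom n m

lemma rpow_integral_Ioc {c : ℝ} (hc : 0 < c) :
    ∫ s in Set.Ioc (0:ℝ) 1, s ^ (c - 1) = 1 / c := by
  rw [← intervalIntegral.integral_of_le (zero_le_one)]
  rw [integral_rpow (Or.inl (by linarith))]
  rw [sub_add_cancel]
  rw [Real.one_rpow, Real.zero_rpow (ne_of_gt hc)]
  ring

lemma isHM_inv_add {a : ℝ} (ha : 0 < a) : IsHM (fun m => 1 / ((m : ℝ) + a)) := by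
  set f : ℝ → NNReal := fun s => Real.toNNReal (s ^ (a - 1)) with hf
  have hrm : Measurable fun s : ℝ => s ^ (a - 1) := by fun_prop
  have hfm : Measurable f := hrm.real_toNNReal
  set ν := volume.restrict (Set.Ioc (0:ℝ) 1) with hν
  refine ⟨ν.withDensity (fun s => (f s : ENNReal)), ?_, ?_, ?_⟩
  · constructor
    rw [withDensity_apply _ MeasurableSet.univ, Measure.restrict_univ]
    have hii : IntegrableOn (fun s : ℝ => s ^ (a - 1)) (Set.Ioc (0:ℝ) 1) := by
      have := intervalIntegral.intervalIntegrable_rpow' (a := 0) (b := 1) (r := a - 1) (by linarith)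
      rwa [intervalIntegrable_iff, Set.uIoc_of_le zero_le_one] at this
    refine lt_of_le_of_lt (lintegral_mono (fun s => ?_)) hii.2
    exact Real.ofReal_le_enorm _
  · rw [withDensity_apply _ measurableSet_Icc.compl, hν,
      Measure.restrict_restrict measurableSet_Icc.compl]
    have : (Set.Icc (0:ℝ) 1)ᶜ ∩ Set.Ioc (0:ℝ) 1 = ∅ := by
      rw [Set.eq_empty_iff_forall_notMem]
      rintro s ⟨hc, hm⟩
      exact hc ⟨le_of_lt hm.1, hm.2⟩
    rw [this]
    simp
  · intro m
    rw [integral_withDensity_eq_integral_smul hfm]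
    have : ∀ s ∈ Set.Ioc (0:ℝ) 1, f s • s ^ m = s ^ (((m : ℝ) + a) - 1) := by
      intro s hs
      have hs0 : 0 < s := hs.1
      simp only [hf, NNReal.smul_def, smul_eq_mul]
      rw [Real.coe_toNNReal _ (Real.rpow_nonneg hs0.le _)]
      rw [show (s : ℝ) ^ m = s ^ ((m : ℝ)) from (Real.rpow_natCast s m).symm]
      rw [← Real.rpow_add hs0]
      ring_nf
    rw [setIntegral_congr_fun measurableSet_Ioc this, rpow_integral_Ioc (by positivity)]

lemma isHM_const {C : ℝ} (hC : 0 ≤ C) : IsHM fun _ => C := by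
  have := isHM_geom hC (r := 1) ⟨zero_le_one, le_refl 1⟩
  simpa using this

lemma IsHM.pow {β : ℕ → ℝ} (h : IsHM β) (n : ℕ) : IsHM (fun m => β m ^ n) := by
  induction n with
  | zero => simpa using isHM_const zero_le_one
  | succ n ih => simpa [pow_succ] using ih.mul h

lemma IsHM.const_mul {β : ℕ → ℝ} {C : ℝ} (hC : 0 ≤ C) (h : IsHM β) :
    IsHM (fun m => C * β m) := (isHM_const hC).mul h

lemma isHM_exp_inv {lam a : ℝ} (hl : 0 ≤ lam) (ha : 0 < a) :
    IsHM (fun m => Real.exp (lam / ((m : ℝ) + a))) := by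
  have key : ∀ m : ℕ, Real.exp (lam / ((m : ℝ) + a))
      = ∑' n : ℕ, (lam ^ n / (Nat.factorial n : ℝ)) * (1 / ((m : ℝ) + a)) ^ n := by
    intro m
    rw [Real.exp_eq_exp_ℝ, NormedSpace.exp_eq_tsum_div]
    refine tsum_congr fun n => ?_
    rw [div_pow]
    ring
  have h2 : IsHM (fun m => ∑' n : ℕ,
      (lam ^ n / (Nat.factorial n : ℝ)) * (1 / ((m : ℝ) + a)) ^ n) := by
    refine IsHM.tsum (fun n => ?_) ?_
    · exact IsHM.const_mul (by positivity) ((isHM_inv_add ha).pow n)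
    · refine (Real.summable_pow_div_factorial (lam / a)).congr fun n => ?_
      rw [Nat.cast_zero, zero_add, div_pow]
      ring
  have : (fun m : ℕ => Real.exp (lam / ((m : ℝ) + a)))
      = fun m : ℕ => ∑' n : ℕ, (lam ^ n / (Nat.factorial n : ℝ)) * (1 / ((m : ℝ) + a)) ^ n :=
    funext key
  rw [this]
  exact h2


lemma chain_mono {n : ℕ} {a b : ℕ → ℝ}
    (hch : ∀ i ∈ Finset.Icc 1 n, b i ≤ a i ∧ a i ≤ b (i + 1)) :
    ∀ i j, 1 ≤ i → i ≤ j → j ≤ n → a i ≤ a j := by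
  intro i j h1 hij hjn
  induction j with
  | zero => omega
  | succ j ih =>
    rcases Nat.eq_or_lt_of_le hij with h | h
    · rw [h]
    · have hij' : i ≤ j := by omega
      have hjn' : j ≤ n := by omega
      refine le_trans (ih hij' hjn') ?_
      have h1j : 1 ≤ j := le_trans h1 hij'
      have c1 := (hch j (Finset.mem_Icc.2 ⟨h1j, hjn'⟩)).2
      have c2 := (hch (j+1) (Finset.mem_Icc.2 ⟨by omega, hjn⟩)).1
      linarith

lemma partial_fraction (a b : ℕ → ℝ) : ∀ (n : ℕ),
    (∀ i ∈ Finset.Icc 1 n, ∀ j ∈ Finset.Icc 1 n, i ≠ j → a i ≠ a j) →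
    (∀ i ∈ Finset.Icc 1 n, b i ≤ a i ∧ a i ≤ b (i + 1)) →
    ∃ ρ : ℕ → ℝ, (∀ i ∈ Finset.Icc 1 n, 0 ≤ ρ i) ∧
      ∀ x : ℝ, (∀ i ∈ Finset.Icc 1 n, x + a i ≠ 0) →
        (∏ j ∈ Finset.Icc 1 (n + 1), (x + b j))
          = (∏ i ∈ Finset.Icc 1 n, (x + a i)) *
            (x + ((∑ j ∈ Finset.Icc 1 (n + 1), b j) - ∑ i ∈ Finset.Icc 1 n, a i)
              - ∑ i ∈ Finset.Icc 1 n, ρ i / (x + a i)) := by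
  intro n
  induction n with
  | zero =>
    intro _ _
    refine ⟨fun _ => 0, by simp, fun x _ => ?_⟩
    simp
  | succ n IH =>
    intro hdist hch
    have hsub : Finset.Icc 1 n ⊆ Finset.Icc 1 (n + 1) := by
      intro i hi; rw [Finset.mem_Icc] at *; omega
    obtain ⟨ρ, hρ, hid⟩ := IH (fun i hi j hj => hdist i (hsub hi) j (hsub hj))
      (fun i hi => hch i (hsub hi))
    set A := a (n + 1) with hA
    set d := b (n + 2) - a (n + 1) with hd
    have hd0 : 0 ≤ d := by
      have := (hch (n+1) (Finset.mem_Icc.2 ⟨by omega, le_refl _⟩)).2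
      simp only [hd]; linarith
    set c := (∑ j ∈ Finset.Icc 1 (n + 1), b j) - ∑ i ∈ Finset.Icc 1 n, a i with hc
    set V := ∑ i ∈ Finset.Icc 1 n, ρ i / (A - a i) with hV
    -- strict ordering below the top
    have hlt : ∀ i ∈ Finset.Icc 1 n, a i < A := by
      intro i hi
      rw [Finset.mem_Icc] at hi
      have hle : a i ≤ a (n+1) := chain_mono hch i (n+1) hi.1 (by omega) (le_refl _)
      have hne : a i ≠ a (n+1) :=
        hdist i (hsub (Finset.mem_Icc.2 hi)) (n+1) (Finset.mem_Icc.2 ⟨by omega, le_refl _⟩)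
          (by omega)
      exact lt_of_le_of_ne hle hne
    -- the new coefficients
    set ρ' : ℕ → ℝ := fun i => if i = n + 1 then d * (A - c - V) else ρ i + d * ρ i / (A - a i)
      with hρ'
    -- evaluate the inductive identity at x = -A to get the sign of A - c - V
    have hPA : (0:ℝ) ≤ A - c - V := by
      have hxA : ∀ i ∈ Finset.Icc 1 n, -A + a i ≠ 0 := by
        intro i hi; have := hlt i hi; intro h; linarith [h]
      have hEval := hid (-A) hxA
      have hsumV : ∑ i ∈ Finset.Icc 1 n, ρ i / (-A + a i) = -V := by
        rw [hV, ← Finset.sum_neg_distrib]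
        refine Finset.sum_congr rfl fun i hi => ?_
        rw [show (-A + a i) = -(A - a i) by ring, div_neg]
      have hN : (0:ℝ) ≤ ∏ j ∈ Finset.Icc 1 (n + 1), (A - b j) := by
        refine Finset.prod_nonneg fun j hj => ?_
        rw [Finset.mem_Icc] at hj
        have h1 := (hch j (Finset.mem_Icc.2 hj)).1
        have h2 : a j ≤ A := chain_mono hch j (n+1) hj.1 (by omega) (le_refl _)
        linarith
      have hD : (0:ℝ) < ∏ i ∈ Finset.Icc 1 n, (A - a i) := by
        refine Finset.prod_pos fun i hi => ?_
        have := hlt i hi; linarith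
      have hLHS : ∏ j ∈ Finset.Icc 1 (n + 1), (-A + b j)
          = (-1 : ℝ) ^ (n + 1) * ∏ j ∈ Finset.Icc 1 (n + 1), (A - b j) := by
        calc ∏ j ∈ Finset.Icc 1 (n + 1), (-A + b j)
            = ∏ j ∈ Finset.Icc 1 (n + 1), ((-1) * (A - b j)) :=
              Finset.prod_congr rfl fun j _ => by ring
          _ = ((-1 : ℝ) ^ (Finset.Icc 1 (n+1)).card) * ∏ j ∈ Finset.Icc 1 (n + 1), (A - b j) := by
              rw [Finset.prod_mul_distrib, Finset.prod_const]
          _ = (-1 : ℝ) ^ (n + 1) * ∏ j ∈ Finset.Icc 1 (n + 1), (A - b j) := by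
              rw [Nat.card_Icc]; norm_num
      have hRHS : ∏ i ∈ Finset.Icc 1 n, (-A + a i)
          = (-1 : ℝ) ^ n * ∏ i ∈ Finset.Icc 1 n, (A - a i) := by
        calc ∏ i ∈ Finset.Icc 1 n, (-A + a i)
            = ∏ i ∈ Finset.Icc 1 n, ((-1) * (A - a i)) :=
              Finset.prod_congr rfl fun i _ => by ring
          _ = ((-1 : ℝ) ^ (Finset.Icc 1 n).card) * ∏ i ∈ Finset.Icc 1 n, (A - a i) := by
              rw [Finset.prod_mul_distrib, Finset.prod_const]
          _ = (-1 : ℝ) ^ n * ∏ i ∈ Finset.Icc 1 n, (A - a i) := by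
              rw [Nat.card_Icc]; norm_num
      rw [hLHS, hRHS, hsumV] at hEval
      have hsq : ((-1 : ℝ) ^ n) * ((-1 : ℝ) ^ n) = 1 := by
        rw [← pow_add, neg_one_pow_eq_one_iff_even]
        · exact Even.add_self n
        · norm_num
      have key : -(∏ j ∈ Finset.Icc 1 (n + 1), (A - b j))
          = (∏ i ∈ Finset.Icc 1 n, (A - a i)) * (-A + c + V) := by
        have := congrArg (fun y => ((-1:ℝ)^n) * y) hEval
        simp only [pow_succ] at this
        nlinarith [this, hsq]
      nlinarith [key, hN, hD]
    refine ⟨ρ', ?_, ?_⟩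
    · intro i hi
      rw [Finset.mem_Icc] at hi
      by_cases h : i = n + 1
      · simp only [hρ', h, if_pos rfl]
        exact mul_nonneg hd0 hPA
      · simp only [hρ', if_neg h]
        have hi' : i ∈ Finset.Icc 1 n := Finset.mem_Icc.2 ⟨hi.1, by omega⟩
        have h1 := hρ i hi'
        have hAi : 0 < A - a i := by have := hlt i hi'; linarith
        positivity
    · intro x hx
      have hxA : x + A ≠ 0 := hx (n+1) (Finset.mem_Icc.2 ⟨by omega, le_refl _⟩)
      have hx' : ∀ i ∈ Finset.Icc 1 n, x + a i ≠ 0 := fun i hi => hx i (hsub hi)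
      set S := ∑ i ∈ Finset.Icc 1 n, ρ i / (x + a i) with hS
      set U := ∑ i ∈ Finset.Icc 1 n, (d * ρ i / (A - a i)) / (x + a i) with hU
      rw [Finset.prod_Icc_succ_top (f := fun j => x + b j) (by omega : 1 ≤ n + 1 + 1)]
      rw [Finset.prod_Icc_succ_top (f := fun i => x + a i) (by omega : 1 ≤ n + 1)]
      rw [hid x hx']
      have hsum' : ∑ i ∈ Finset.Icc 1 (n+1), ρ' i / (x + a i)
          = d * (A - c - V) / (x + A) + (S + U) := by
        rw [Finset.sum_Icc_succ_top (by omega : 1 ≤ n + 1)]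
        have htop : ρ' (n+1) / (x + a (n+1)) = d * (A - c - V) / (x + A) := by
          simp only [hρ', if_pos rfl, hA]
        rw [htop, add_comm]
        congr 1
        rw [hS, hU, ← Finset.sum_add_distrib]
        refine Finset.sum_congr rfl fun i hi => ?_
        simp only [hρ', if_neg (show i ≠ n + 1 by rw [Finset.mem_Icc] at hi; omega)]
        rw [add_div]
      have hc' : (∑ j ∈ Finset.Icc 1 (n + 2), b j) - ∑ i ∈ Finset.Icc 1 (n+1), a i
          = c + d := by
        rw [Finset.sum_Icc_succ_top (f := b) (by omega : 1 ≤ n + 1 + 1),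
          Finset.sum_Icc_succ_top (f := a) (by omega : 1 ≤ n + 1), hc, hd]
        ring
      rw [hc', hsum']
      have hU2 : (x + A) * U = d * V + d * S := by
        rw [hU, Finset.mul_sum, hV, hS, Finset.mul_sum, Finset.mul_sum,
          ← Finset.sum_add_distrib]
        refine Finset.sum_congr rfl fun i hi => ?_
        have h1 : x + a i ≠ 0 := hx' i hi
        have h2 : A - a i ≠ 0 := by have := hlt i hi; intro h; linarith [h]
        field_simp
        ring
      have key : (x + c - S) * (x + b (n+2))
          = (x + A) * (x + (c + d) - (d * (A - c - V) / (x + A) + (S + U))) := by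
        have e1 : (x + A) * (d * (A - c - V) / (x + A)) = d * (A - c - V) :=
          mul_div_cancel₀ _ hxA
        have expand : (x + A) * (x + (c + d) - (d * (A - c - V) / (x + A) + (S + U)))
            = (x + A) * (x + (c + d)) - (x + A) * (d * (A - c - V) / (x + A))
              - (x + A) * S - (x + A) * U := by ring
        rw [expand, e1, hU2]
        have hb2 : b (n + 2) = A + d := by rw [hd]; ring
        rw [hb2]
        ring
      calc (∏ i ∈ Finset.Icc 1 n, (x + a i)) * (x + c - S) * (x + b (n+2))
          = (∏ i ∈ Finset.Icc 1 n, (x + a i)) * ((x + c - S) * (x + b (n+2))) := by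
            ring
        _ = (∏ i ∈ Finset.Icc 1 n, (x + a i)) *
              ((x + A) * (x + (c + d) - (d * (A - c - V) / (x + A) + (S + U)))) := by
            rw [key]
        _ = (∏ i ∈ Finset.Icc 1 n, (x + a i)) * (x + a (n+1)) *
              (x + (c + d) - (d * (A - c - V) / (x + A) + (S + U))) := by
            rw [← hA]; ring

lemma isHM_finset_prod {ι : Type*} (s : Finset ι) (f : ι → ℕ → ℝ)
    (h : ∀ i ∈ s, IsHM (f i)) : IsHM (fun m => ∏ i ∈ s, f i m) := by
  classical
  induction s using Finset.induction with
  | empty => simpa using isHM_const zero_le_one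
  | insert x s hx ih =>
    rw [show (fun m => ∏ i ∈ insert x s, f i m) = fun m => f x m * ∏ i ∈ s, f i m from
      funext fun m => Finset.prod_insert hx]
    exact (h x (Finset.mem_insert_self x s)).mul
      (ih fun i hi => h i (Finset.mem_insert_of_mem hi))

/-- under the interlacing condition `b₁ ≤ a₁ ≤ b₂ ≤ … ≤ a_{k-1} ≤ b_k`
(all `aᵢ`, `bⱼ` distinct positive reals), for every `t ∈ (0,1)` the sequence
`m ↦ t^{b(m)/a(m)}` is a Hausdorff moment sequence. -/
theorem hausdorff_moment_of_t_pow_ratio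
    (k : ℕ) (hk : 1 < k) (a b : ℕ → ℝ)
    (ha0 : 0 < a 0) (hb0 : 0 < b 0)
    (hapos : ∀ i ∈ Finset.Icc 1 (k - 1), 0 < a i)
    (hbpos : ∀ j ∈ Finset.Icc 1 k, 0 < b j)
    (hadist : ∀ i ∈ Finset.Icc 1 (k - 1), ∀ j ∈ Finset.Icc 1 (k - 1), i ≠ j → a i ≠ a j)
    (hbdist : ∀ i ∈ Finset.Icc 1 k, ∀ j ∈ Finset.Icc 1 k, i ≠ j → b i ≠ b j)
    (habdist : ∀ i ∈ Finset.Icc 1 (k - 1), ∀ j ∈ Finset.Icc 1 k, a i ≠ b j)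
    (hinter : ∀ i ∈ Finset.Icc 1 (k - 1), b i ≤ a i ∧ a i ≤ b (i + 1))
    (t : ℝ) (ht : t ∈ Set.Ioo (0 : ℝ) 1) :
    IsHausdorffMoment (fun m : ℕ =>
      t ^ ((b 0 * ∏ j ∈ Finset.Icc 1 k, ((m : ℝ) + b j)) /
            (a 0 * ∏ j ∈ Finset.Icc 1 (k - 1), ((m : ℝ) + a j)))) := by
  obtain ⟨n, rfl⟩ : ∃ n, k = n + 1 := ⟨k - 1, by omega⟩
  have hn1 : n + 1 - 1 = n := by omega
  rw [hn1] at hapos hadist habdist hinter ⊢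
  obtain ⟨ρ, hρ, hid⟩ := partial_fraction a b n hadist hinter
  set c := (∑ j ∈ Finset.Icc 1 (n + 1), b j) - ∑ i ∈ Finset.Icc 1 n, a i with hc
  set β0 := b 0 / a 0 with hβ0
  have hβ0pos : 0 < β0 := div_pos hb0 ha0
  set L := Real.log t with hL
  have hLneg : L < 0 := Real.log_neg ht.1 ht.2
  have hLβ : L * β0 < 0 := mul_neg_of_neg_of_pos hLneg hβ0pos
  -- the exponent simplifies
  have hexp : ∀ m : ℕ,
      (b 0 * ∏ j ∈ Finset.Icc 1 (n + 1), ((m : ℝ) + b j)) /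
        (a 0 * ∏ j ∈ Finset.Icc 1 n, ((m : ℝ) + a j))
      = β0 * ((m : ℝ) + c - ∑ i ∈ Finset.Icc 1 n, ρ i / ((m : ℝ) + a i)) := by
    intro m
    have hx : ∀ i ∈ Finset.Icc 1 n, (m : ℝ) + a i ≠ 0 := by
      intro i hi
      have := hapos i hi
      positivity
    have hprodne : (∏ j ∈ Finset.Icc 1 n, ((m : ℝ) + a j)) ≠ 0 :=
      Finset.prod_ne_zero_iff.2 hx
    rw [hid (m : ℝ) hx, hβ0]
    field_simp
  -- rewrite the sequence as a product of elementary moment sequences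
  have hfun : (fun m : ℕ =>
      t ^ ((b 0 * ∏ j ∈ Finset.Icc 1 (n + 1), ((m : ℝ) + b j)) /
            (a 0 * ∏ j ∈ Finset.Icc 1 n, ((m : ℝ) + a j))))
      = fun m : ℕ => (Real.exp (L * β0 * c) * (Real.exp (L * β0)) ^ m) *
          ∏ i ∈ Finset.Icc 1 n, Real.exp ((-(L * β0) * ρ i) / ((m : ℝ) + a i)) := by
    funext m
    rw [hexp m, Real.rpow_def_of_pos ht.1, ← hL]
    rw [← Real.exp_nat_mul, ← Real.exp_sum, ← Real.exp_add, ← Real.exp_add]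
    congr 1
    have hSum : ∑ i ∈ Finset.Icc 1 n, (-(L * β0) * ρ i) / ((m : ℝ) + a i)
        = -(L * β0) * ∑ i ∈ Finset.Icc 1 n, ρ i / ((m : ℝ) + a i) := by
      rw [Finset.mul_sum]
      exact Finset.sum_congr rfl fun i _ => (mul_div_assoc _ _ _)
    rw [hSum]
    ring
  rw [hfun]
  refine IsHM.toHausdorff ?_
  refine IsHM.mul ?_ ?_
  · exact isHM_geom (Real.exp_nonneg _)
      ⟨Real.exp_nonneg _, Real.exp_le_one_iff.2 (le_of_lt hLβ)⟩
  · refine isHM_finset_prod _ _ fun i hi => ?_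
    exact isHM_exp_inv (mul_nonneg (by linarith) (hρ i hi)) (hapos i hi)
end

section
/- Let k ∈ ℕ with k > 1, let a(x) = a_0 ∏_{i=1}^{k-1}(x + a_i) and b(x) = b_0 ∏_{i=1}^{k}(x + b_i) with a_0, b_0 > 0 and all a_i, b_j > 0, and let {c(m)}_{m∈ℤ₊} be a sequence of positive real numbers such that the sequence m ↦ c(m)/a(m) is completely monotone. If for every t ∈ (0,1) the sequence m ↦ t^{b(m)/a(m)} is a Hausdorff moment sequence, then the net (m,n) ↦ c(m)/(b(m) + a(m)·n), for (m,n) ∈ ℤ₊², is joint completely monotone. -/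
open MeasureTheory Filter

/-- First partial forward difference. -/
def Delta1 (x : ℕ → ℕ → ℝ) : ℕ → ℕ → ℝ := fun m n => x (m + 1) n - x m n

/-- Second partial forward difference. -/
def Delta2 (x : ℕ → ℕ → ℝ) : ℕ → ℕ → ℝ := fun m n => x m (n + 1) - x m n

/-- A net indexed by ℤ₊² is joint completely monotone. -/
def JointCM (x : ℕ → ℕ → ℝ) : Prop :=
  ∀ i j m n : ℕ, 0 ≤ (-1 : ℝ) ^ (i + j) * (Delta1^[i] (Delta2^[j] x)) m n

/-- Forward difference of a sequence. -/
def DeltaSeq (x : ℕ → ℝ) : ℕ → ℝ := fun m => x (m + 1) - x m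

/-- A sequence is completely monotone. -/
def CM (x : ℕ → ℝ) : Prop :=
  ∀ k m : ℕ, 0 ≤ (-1 : ℝ) ^ k * (DeltaSeq^[k] x) m

lemma ds_add : ∀ (k : ℕ) (x y : ℕ → ℝ),
    DeltaSeq^[k] (fun m => x m + y m) = fun m => DeltaSeq^[k] x m + DeltaSeq^[k] y m
  | 0, x, y => rfl
  | (k+1), x, y => by
    rw [Function.iterate_succ_apply, Function.iterate_succ_apply, Function.iterate_succ_apply]
    have h : DeltaSeq (fun m => x m + y m) = fun m => DeltaSeq x m + DeltaSeq y m := by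
      funext m; simp only [DeltaSeq]; ring
    rw [h, ds_add k]

lemma ds_neg : ∀ (k : ℕ) (x : ℕ → ℝ),
    DeltaSeq^[k] (fun m => -(x m)) = fun m => -(DeltaSeq^[k] x m)
  | 0, x => rfl
  | (k+1), x => by
    rw [Function.iterate_succ_apply, Function.iterate_succ_apply]
    have h : DeltaSeq (fun m => -(x m)) = fun m => -(DeltaSeq x m) := by
      funext m; simp only [DeltaSeq]; ring
    rw [h, ds_neg k]

lemma ds_shift : ∀ (k : ℕ) (x : ℕ → ℝ),
    DeltaSeq^[k] (fun m => x (m+1)) = fun m => DeltaSeq^[k] x (m+1)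
  | 0, x => rfl
  | (k+1), x => by
    rw [Function.iterate_succ_apply, Function.iterate_succ_apply]
    have h : DeltaSeq (fun m => x (m+1)) = fun m => DeltaSeq x (m+1) := by
      funext m; simp only [DeltaSeq]
    rw [h, ds_shift k]

lemma CM.shift {x : ℕ → ℝ} (hx : CM x) : CM (fun m => x (m+1)) := by
  intro k m
  rw [ds_shift]
  exact hx k (m+1)

lemma CM.negDelta {x : ℕ → ℝ} (hx : CM x) : CM (fun m => -(DeltaSeq x m)) := by
  intro k m
  have h := hx (k+1) m
  rw [Function.iterate_succ_apply] at h
  rw [ds_neg]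
  show 0 ≤ (-1:ℝ)^k * -(DeltaSeq^[k] (DeltaSeq x) m)
  have e : (-1:ℝ)^k * -(DeltaSeq^[k] (DeltaSeq x) m)
      = (-1:ℝ)^(k+1) * DeltaSeq^[k] (DeltaSeq x) m := by
    rw [pow_succ]; ring
  rw [e]; exact h

lemma cm_mul_aux : ∀ (k : ℕ) (x y : ℕ → ℝ), CM x → CM y →
    ∀ m, 0 ≤ (-1:ℝ)^k * DeltaSeq^[k] (fun m => x m * y m) m
  | 0, x, y, hx, hy, m => by
      simpa using mul_nonneg (by simpa using hx 0 m) (by simpa using hy 0 m)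
  | (k+1), x, y, hx, hy, m => by
      have hsplit : DeltaSeq (fun m => x m * y m)
          = fun m => (fun m => x (m+1) * DeltaSeq y m) m + (fun m => DeltaSeq x m * y m) m := by
        funext m; simp only [DeltaSeq]; ring
      have h1 := cm_mul_aux k (fun m => x (m+1)) (fun m => -(DeltaSeq y m)) hx.shift hy.negDelta m
      have h2 := cm_mul_aux k (fun m => -(DeltaSeq x m)) y hx.negDelta hy m
      have hu : (fun m => (fun m => x (m+1)) m * (fun m => -(DeltaSeq y m)) m)
          = fun m => -((fun m => x (m+1) * DeltaSeq y m) m) := by funext m; ring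
      have hv : (fun m => (fun m => -(DeltaSeq x m)) m * y m)
          = fun m => -((fun m => DeltaSeq x m * y m) m) := by funext m; ring
      rw [hu, ds_neg] at h1
      rw [hv, ds_neg] at h2
      rw [Function.iterate_succ_apply, hsplit, ds_add, pow_succ]
      simp only at h1 h2 ⊢
      nlinarith [h1, h2]

lemma cm_mul {x y : ℕ → ℝ} (hx : CM x) (hy : CM y) : CM (fun m => x m * y m) :=
  fun k m => cm_mul_aux k x y hx hy m

lemma momentCM {β : ℕ → ℝ} (h : IsHausdorffMoment β) : CM β := by
  obtain ⟨μ, hfin, _hsupp, hβ⟩ := h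
  haveI := hfin
  haveI : IsFiniteMeasureOnCompacts μ := ⟨fun K _ => measure_lt_top μ K⟩
  have hint : ∀ (mm kk : ℕ),
      IntegrableOn (fun s : ℝ => s ^ mm * (s - 1) ^ kk) (Set.Icc (0:ℝ) 1) μ := by
    intro mm kk
    exact (Continuous.mul (continuous_pow mm)
      ((continuous_id.sub continuous_const).pow kk)).integrableOn_Icc
  have key : ∀ (kk m : ℕ),
      DeltaSeq^[kk] β m = ∫ s in Set.Icc (0:ℝ) 1, s ^ m * (s - 1) ^ kk ∂μ := by
    intro kk
    induction kk with
    | zero =>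
      intro m
      simp only [Function.iterate_zero, id_eq, pow_zero, mul_one]
      exact hβ m
    | succ kk ih =>
      intro m
      rw [Function.iterate_succ_apply']
      show DeltaSeq^[kk] β (m+1) - DeltaSeq^[kk] β m = _
      rw [ih (m+1), ih m, ← integral_sub (hint (m+1) kk) (hint m kk)]
      apply setIntegral_congr_fun measurableSet_Icc
      intro s _
      ring
  intro kk m
  rw [key kk m, ← integral_const_mul]
  apply setIntegral_nonneg measurableSet_Icc
  intro s hs
  have e : (-1:ℝ)^kk * (s ^ m * (s-1)^kk) = s ^ m * (1-s)^kk := by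
    have : ((1:ℝ)-s)^kk = (-1:ℝ)^kk * (s-1)^kk := by
      rw [← mul_pow]; congr 1; ring
    rw [this]; ring
  rw [e]
  exact mul_nonneg (pow_nonneg hs.1 m) (pow_nonneg (by linarith [hs.2]) kk)

theorem jcm_main (A B c : ℕ → ℝ) (hA : ∀ m, 0 < A m) (hB : ∀ m, 0 < B m)
    (hc : ∀ m, 0 < c m)
    (hCM : CM (fun m => c m / A m))
    (hHM : ∀ t ∈ Set.Ioo (0:ℝ) 1, IsHausdorffMoment (fun m => t ^ (B m / A m))) :
    JointCM (fun m n : ℕ => c m / (B m + A m * (n:ℝ))) := by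
  have hβ : ∀ m, 0 < B m / A m := fun m => div_pos (hB m) (hA m)
  -- complete monotonicity of m ↦ (c m / A m) * t ^ (B m / A m) for t ∈ (0,1]
  have hcm : ∀ t ∈ Set.Ioc (0:ℝ) 1, CM (fun m => (c m / A m) * t ^ (B m / A m)) := by
    intro t ht
    rcases eq_or_lt_of_le ht.2 with h1 | h1
    · have : (fun m => (c m / A m) * t ^ (B m / A m)) = fun m => c m / A m := by
        funext m; rw [h1, Real.one_rpow, mul_one]
      rw [this]; exact hCM
    · exact cm_mul hCM (momentCM (hHM t ⟨ht.1, h1⟩))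
  -- basic interval integrability
  have hci : ∀ (r : ℝ), -1 < r → ∀ j : ℕ,
      IntervalIntegrable (fun t => t ^ r * (t-1)^j) volume 0 1 := by
    intro r hr j
    exact (intervalIntegral.intervalIntegrable_rpow' hr).mul_continuousOn
      ((continuous_id.sub continuous_const).pow j).continuousOn
  have hrgt : ∀ (m n : ℕ), -1 < B m / A m + ((n:ℝ) - 1) := by
    intro m n
    have h0 : (0:ℝ) ≤ n := Nat.cast_nonneg n
    have := hβ m
    linarith
  -- integrability of all the integrands appearing below
  have hint : ∀ (i m j n : ℕ), IntervalIntegrable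
      (fun t => (DeltaSeq^[i] (fun m' => (c m' / A m') * t ^ (B m' / A m'))) m *
        ((t-1)^j * t ^ ((n:ℝ)-1))) volume 0 1 := by
    intro i
    induction i with
    | zero =>
      intro m j n
      simp only [Function.iterate_zero, id_eq]
      rw [intervalIntegrable_iff_integrableOn_Ioc_of_le zero_le_one]
      have base : IntervalIntegrable
          (fun t => (c m / A m) * (t ^ (B m / A m + ((n:ℝ)-1)) * (t-1)^j)) volume 0 1 :=
        (hci _ (hrgt m n) j).const_mul _
      rw [intervalIntegrable_iff_integrableOn_Ioc_of_le zero_le_one] at base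
      apply base.congr_fun ?_ measurableSet_Ioc
      intro t ht
      simp only [Real.rpow_add ht.1]
      ring
    | succ i ih =>
      intro m j n
      have goal_eq : (fun t => (DeltaSeq^[i+1] (fun m' => (c m' / A m') * t ^ (B m' / A m'))) m *
            ((t-1)^j * t ^ ((n:ℝ)-1)))
          = fun t => (DeltaSeq^[i] (fun m' => (c m' / A m') * t ^ (B m' / A m'))) (m+1) *
              ((t-1)^j * t ^ ((n:ℝ)-1)) -
            (DeltaSeq^[i] (fun m' => (c m' / A m') * t ^ (B m' / A m'))) m *
              ((t-1)^j * t ^ ((n:ℝ)-1)) := by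
        funext t
        rw [Function.iterate_succ_apply']
        show (DeltaSeq^[i] _ (m+1) - DeltaSeq^[i] _ m) * _ = _
        ring
      rw [goal_eq]
      exact (ih (m+1) j n).sub (ih m j n)
  -- value of the basic integral
  have hval : ∀ (m n : ℕ), c m / (B m + A m * (n:ℝ))
      = ∫ t in (0:ℝ)..1, ((c m / A m) * t ^ (B m / A m)) * t ^ ((n:ℝ)-1) := by
    intro m n
    have h1 : (∫ t in (0:ℝ)..1, ((c m / A m) * t ^ (B m / A m)) * t ^ ((n:ℝ)-1))
        = ∫ t in (0:ℝ)..1, (c m / A m) * t ^ (B m / A m + ((n:ℝ)-1)) := by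
      rw [intervalIntegral.integral_of_le zero_le_one,
        intervalIntegral.integral_of_le zero_le_one]
      apply setIntegral_congr_fun measurableSet_Ioc
      intro t ht
      simp only [Real.rpow_add ht.1]
      ring
    have hne : B m / A m + ((n:ℝ)-1) + 1 ≠ 0 := by
      have h0 : (0:ℝ) ≤ n := Nat.cast_nonneg n
      have := hβ m
      intro hcon
      linarith
    rw [h1, intervalIntegral.integral_const_mul, integral_rpow (Or.inl (hrgt m n)),
      Real.one_rpow, Real.zero_rpow hne, sub_zero]
    have hAne : A m ≠ 0 := (hA m).ne'
    have hBAne : B m + A m * (n:ℝ) ≠ 0 := by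
      have h0 : (0:ℝ) ≤ A m * n := mul_nonneg (hA m).le (Nat.cast_nonneg n)
      have := hB m
      intro hcon
      linarith
    have hq : B m / A m + ((n:ℝ)-1) + 1 = (B m + A m * (n:ℝ)) / A m := by
      field_simp
      ring
    rw [hq, one_div_div, div_mul_div_comm, mul_comm (A m) (B m + A m * (n:ℝ)),
      mul_div_mul_right _ _ hAne]
  -- the n-differences
  have keyj : ∀ (j m n : ℕ),
      (Delta2^[j] (fun m n : ℕ => c m / (B m + A m * (n:ℝ)))) m n
      = ∫ t in (0:ℝ)..1, ((c m / A m) * t ^ (B m / A m)) * ((t-1)^j * t ^ ((n:ℝ)-1)) := by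
    intro j
    induction j with
    | zero =>
      intro m n
      simp only [Function.iterate_zero, id_eq, pow_zero, one_mul]
      exact hval m n
    | succ j ih =>
      intro m n
      rw [Function.iterate_succ_apply']
      show (Delta2^[j] _) m (n+1) - (Delta2^[j] _) m n = _
      rw [ih m (n+1), ih m n]
      have i1 : IntervalIntegrable
          (fun t => ((c m / A m) * t ^ (B m / A m)) * ((t-1)^j * t ^ (((n+1:ℕ):ℝ)-1)))
          volume 0 1 := by simpa using hint 0 m j (n+1)
      have i2 : IntervalIntegrable
          (fun t => ((c m / A m) * t ^ (B m / A m)) * ((t-1)^j * t ^ ((n:ℝ)-1)))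
          volume 0 1 := by simpa using hint 0 m j n
      rw [← intervalIntegral.integral_sub i1 i2]
      rw [intervalIntegral.integral_of_le zero_le_one,
        intervalIntegral.integral_of_le zero_le_one]
      apply setIntegral_congr_fun measurableSet_Ioc
      intro t ht
      have hc1 : ((n+1:ℕ):ℝ) - 1 = ((n:ℝ)-1) + 1 := by push_cast; ring
      simp only [hc1, Real.rpow_add ht.1, Real.rpow_one]
      ring
  -- the m-differences
  have keyi : ∀ (i j m n : ℕ),
      (Delta1^[i] (Delta2^[j] (fun m n : ℕ => c m / (B m + A m * (n:ℝ))))) m n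
      = ∫ t in (0:ℝ)..1, (DeltaSeq^[i] (fun m' => (c m' / A m') * t ^ (B m' / A m'))) m *
          ((t-1)^j * t ^ ((n:ℝ)-1)) := by
    intro i
    induction i with
    | zero =>
      intro j m n
      simp only [Function.iterate_zero, id_eq]
      exact keyj j m n
    | succ i ih =>
      intro j m n
      rw [Function.iterate_succ_apply']
      show (Delta1^[i] _) (m+1) n - (Delta1^[i] _) m n = _
      rw [ih j (m+1) n, ih j m n, ← intervalIntegral.integral_sub (hint i (m+1) j n) (hint i m j n)]
      congr 1
      funext t
      rw [Function.iterate_succ_apply']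
      show _ = (DeltaSeq^[i] _ (m+1) - DeltaSeq^[i] _ m) * _
      ring
  -- conclusion
  intro i j m n
  rw [keyi i j m n, ← intervalIntegral.integral_const_mul,
    intervalIntegral.integral_of_le zero_le_one]
  apply setIntegral_nonneg measurableSet_Ioc
  intro t ht
  have h1 : 0 ≤ (-1:ℝ)^i * (DeltaSeq^[i] (fun m' => (c m' / A m') * t ^ (B m' / A m'))) m :=
    hcm t ht i m
  have h2 : (0:ℝ) ≤ (1-t)^j := pow_nonneg (by linarith [ht.2]) j
  have h3 : (0:ℝ) ≤ t ^ ((n:ℝ)-1) := Real.rpow_nonneg ht.1.le _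
  have hj : ((1:ℝ)-t)^j = (-1:ℝ)^j * (t-1)^j := by
    rw [← mul_pow]; congr 1; ring
  have e : (-1:ℝ)^(i+j) * ((DeltaSeq^[i] (fun m' => (c m' / A m') * t ^ (B m' / A m'))) m *
        ((t-1)^j * t ^ ((n:ℝ)-1)))
      = ((-1:ℝ)^i * (DeltaSeq^[i] (fun m' => (c m' / A m') * t ^ (B m' / A m'))) m) *
        (((1:ℝ)-t)^j * t ^ ((n:ℝ)-1)) := by
    rw [hj, pow_add]; ring
  rw [e]
  exact mul_nonneg h1 (mul_nonneg h2 h3)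

/-- Lemma transforming the two-variable problem to one variable:
if `m ↦ c(m)/a(m)` is completely monotone and `m ↦ t^{b(m)/a(m)}` is a Hausdorff moment
sequence for every `t ∈ (0,1)`, then `(m,n) ↦ c(m)/(b(m) + a(m)n)` is joint completely
monotone. -/
theorem jointCM_of_hausdorff_moment
    (k : ℕ) (hk : 1 < k) (a b : ℕ → ℝ)
    (ha0 : 0 < a 0) (hb0 : 0 < b 0)
    (hapos : ∀ i ∈ Finset.Icc 1 (k - 1), 0 < a i)
    (hbpos : ∀ j ∈ Finset.Icc 1 k, 0 < b j)
    (c : ℕ → ℝ) (hc : ∀ m : ℕ, 0 < c m)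
    (hCM : CM (fun m : ℕ =>
      c m / (a 0 * ∏ j ∈ Finset.Icc 1 (k - 1), ((m : ℝ) + a j))))
    (hHM : ∀ t ∈ Set.Ioo (0 : ℝ) 1,
      IsHausdorffMoment (fun m : ℕ =>
        t ^ ((b 0 * ∏ j ∈ Finset.Icc 1 k, ((m : ℝ) + b j)) /
              (a 0 * ∏ j ∈ Finset.Icc 1 (k - 1), ((m : ℝ) + a j))))) :
    JointCM (fun m n : ℕ =>
      c m / ((b 0 * ∏ j ∈ Finset.Icc 1 k, ((m : ℝ) + b j)) +
              (a 0 * ∏ j ∈ Finset.Icc 1 (k - 1), ((m : ℝ) + a j)) * n)) := by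
  have hApos : ∀ m : ℕ, 0 < a 0 * ∏ j ∈ Finset.Icc 1 (k - 1), ((m : ℝ) + a j) := by
    intro m
    refine mul_pos ha0 (Finset.prod_pos ?_)
    intro j hj
    have h1 := hapos j hj
    have h2 : (0:ℝ) ≤ m := Nat.cast_nonneg m
    linarith
  have hBpos : ∀ m : ℕ, 0 < b 0 * ∏ j ∈ Finset.Icc 1 k, ((m : ℝ) + b j) := by
    intro m
    refine mul_pos hb0 (Finset.prod_pos ?_)
    intro j hj
    have h1 := hbpos j hj
    have h2 : (0:ℝ) ≤ m := Nat.cast_nonneg m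
    linarith
  exact jcm_main (fun m => a 0 * ∏ j ∈ Finset.Icc 1 (k - 1), ((m : ℝ) + a j))
    (fun m => b 0 * ∏ j ∈ Finset.Icc 1 k, ((m : ℝ) + b j)) c hApos hBpos hc hCM hHM
end

section
/- Let k ∈ ℕ with k > 1, and let a_1, …, a_{k-1}, b_1, …, b_k be distinct positive real numbers with a_0, b_0 > 0. Define a(x) = a_0 ∏_{j=1}^{k-1}(x + a_j), b(x) = b_0 ∏_{j=1}^{k}(x + b_j), and p(x,y) = b(x) + a(x)·y. If b_1 ≤ a_1 ≤ b_2 ≤ a_2 ≤ … ≤ a_{k-1} ≤ b_k, then the net (m,n) ↦ 1/p(m,n), for (m,n) ∈ ℤ₊², is joint completely monotone. -/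
open MeasureTheory Filter

namespace CMaux


lemma iter_congr (k : ℕ) {f g : ℕ → ℝ} (h : ∀ m, f m = g m) :
    ∀ m, DeltaSeq^[k] f m = DeltaSeq^[k] g m := by
  have : f = g := funext h
  subst this; intro m; rfl

lemma iter_add (k : ℕ) (f g : ℕ → ℝ) :
    ∀ m, DeltaSeq^[k] (fun m => f m + g m) m = DeltaSeq^[k] f m + DeltaSeq^[k] g m := by
  induction k generalizing f g with
  | zero => intro m; rfl
  | succ k ih =>
    intro m
    rw [Function.iterate_succ_apply, Function.iterate_succ_apply, Function.iterate_succ_apply]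
    rw [iter_congr k (f := DeltaSeq fun m => f m + g m)
      (g := fun m => DeltaSeq f m + DeltaSeq g m) (fun m => by simp only [DeltaSeq]; ring)]
    exact ih _ _ m

lemma iter_smul (k : ℕ) (c : ℝ) (f : ℕ → ℝ) :
    ∀ m, DeltaSeq^[k] (fun m => c * f m) m = c * DeltaSeq^[k] f m := by
  induction k generalizing f with
  | zero => intro m; rfl
  | succ k ih =>
    intro m
    rw [Function.iterate_succ_apply, Function.iterate_succ_apply]
    rw [iter_congr k (f := DeltaSeq fun m => c * f m)
      (g := fun m => c * DeltaSeq f m) (fun m => by simp only [DeltaSeq]; ring)]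
    exact ih _ m

lemma iter_shift (k : ℕ) (f : ℕ → ℝ) :
    ∀ m, DeltaSeq^[k] (fun m => f (m + 1)) m = DeltaSeq^[k] f (m + 1) := by
  induction k generalizing f with
  | zero => intro m; rfl
  | succ k ih =>
    intro m
    rw [Function.iterate_succ_apply, Function.iterate_succ_apply]
    rw [iter_congr k (f := DeltaSeq fun m => f (m + 1))
      (g := fun m => DeltaSeq f (m + 1)) (fun m => by simp [DeltaSeq])]
    exact ih _ m

lemma sign_step (k : ℕ) (X : ℝ) : (-1:ℝ)^(k+1) * ((-1) * X) = (-1)^k * X := by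
  ring

lemma cm_nonneg {f : ℕ → ℝ} (hf : CM f) (m : ℕ) : 0 ≤ f m := by
  simpa using hf 0 m

lemma cm_shift {f : ℕ → ℝ} (hf : CM f) : CM (fun m => f (m + 1)) := by
  intro k m
  rw [iter_shift]; exact hf k (m + 1)

lemma cm_negDelta {f : ℕ → ℝ} (hf : CM f) : CM (fun m => f m - f (m + 1)) := by
  intro k m
  have h : DeltaSeq^[k] (fun m => f m - f (m + 1)) m = (-1) * DeltaSeq^[k+1] f m := by
    rw [Function.iterate_succ_apply]
    rw [iter_congr k (f := fun m => f m - f (m + 1)) (g := fun m => (-1) * DeltaSeq f m)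
      (fun m => by simp only [DeltaSeq]; ring)]
    rw [iter_smul]
  rw [h, show (-1:ℝ)^k * ((-1) * DeltaSeq^[k+1] f m) = (-1)^(k+1) * DeltaSeq^[k+1] f m by ring]
  exact hf (k+1) m

lemma cm_add {f g : ℕ → ℝ} (hf : CM f) (hg : CM g) : CM (fun m => f m + g m) := by
  intro k m
  rw [iter_add, mul_add]
  exact add_nonneg (hf k m) (hg k m)

lemma cm_smul {f : ℕ → ℝ} {c : ℝ} (hc : 0 ≤ c) (hf : CM f) : CM (fun m => c * f m) := by
  intro k m
  rw [iter_smul, show (-1:ℝ)^k * (c * DeltaSeq^[k] f m) = c * ((-1)^k * DeltaSeq^[k] f m) by ring]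
  exact mul_nonneg hc (hf k m)

lemma iter_zero (k : ℕ) : ∀ m, DeltaSeq^[k] (fun _ => (0:ℝ)) m = 0 := by
  induction k with
  | zero => intro m; rfl
  | succ k ih =>
    intro m
    rw [Function.iterate_succ_apply,
      iter_congr k (f := DeltaSeq fun _ => (0:ℝ)) (g := fun _ => (0:ℝ))
        (fun m => by simp [DeltaSeq])]
    exact ih m

lemma cm_const (c : ℝ) (hc : 0 ≤ c) : CM (fun _ => c) := by
  intro k m
  cases k with
  | zero => simpa using hc
  | succ k =>
    rw [Function.iterate_succ_apply,
      iter_congr k (f := DeltaSeq fun _ => c) (g := fun _ => (0:ℝ)) (fun m => by simp [DeltaSeq]),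
      iter_zero k m]
    simp

lemma cm_mul {f g : ℕ → ℝ} (hf : CM f) (hg : CM g) : CM (fun m => f m * g m) := by
  intro k
  induction k generalizing f g with
  | zero =>
    intro m; simpa using mul_nonneg (cm_nonneg hf m) (cm_nonneg hg m)
  | succ k ih =>
    intro m
    rw [Function.iterate_succ_apply]
    rw [iter_congr k (f := DeltaSeq fun m => f m * g m)
      (g := fun m => (-1) * (((f m - f (m+1)) * g (m+1)) + (f m * (g m - g (m+1)))))
      (fun m => by simp only [DeltaSeq]; ring)]
    rw [iter_smul, sign_step, iter_add, mul_add]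
    exact add_nonneg (ih (cm_negDelta hf) (cm_shift hg) m) (ih hf (cm_negDelta hg) m)

lemma cm_prod {ι : Type*} (s : Finset ι) (F : ι → ℕ → ℝ) (hF : ∀ i ∈ s, CM (F i)) :
    CM (fun m => ∏ i ∈ s, F i m) := by
  induction s using Finset.cons_induction with
  | empty => simpa using cm_const 1 zero_le_one
  | cons i s his ih =>
    have : CM (fun m => F i m * ∏ j ∈ s, F j m) :=
      cm_mul (hF i (Finset.mem_cons_self i s)) (ih (fun j hj => hF j (Finset.mem_cons_of_mem hj)))
    intro k m
    rw [iter_congr k (f := fun m => ∏ j ∈ Finset.cons i s his, F j m)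
      (g := fun m => F i m * ∏ j ∈ s, F j m) (fun m => by simp [Finset.prod_cons])]
    exact this k m

lemma cm_antitone {f : ℕ → ℝ} (hf : CM f) : ∀ m, f m ≤ f 0 := by
  have h1 : ∀ m, f (m+1) ≤ f m := by
    intro m
    have := hf 1 m
    simp only [Function.iterate_one, DeltaSeq] at this
    nlinarith
  intro m
  induction m with
  | zero => exact le_rfl
  | succ m ih => exact (h1 m).trans ih

lemma cm_tendsto {f : ℕ → ℝ} {F : ℕ → ℕ → ℝ} (hF : ∀ N, CM (F N))
    (hlim : ∀ m, Tendsto (fun N => F N m) atTop (nhds (f m))) : CM f := by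
  have key : ∀ k (f : ℕ → ℝ) (F : ℕ → ℕ → ℝ),
      (∀ m, Tendsto (fun N => F N m) atTop (nhds (f m))) →
      ∀ m, Tendsto (fun N => DeltaSeq^[k] (F N) m) atTop (nhds (DeltaSeq^[k] f m)) := by
    intro k
    induction k with
    | zero => intro f F h m; exact h m
    | succ k ih =>
      intro f F h m
      rw [Function.iterate_succ_apply]
      have := ih (DeltaSeq f) (fun N => DeltaSeq (F N)) (fun m => ((h (m+1)).sub (h m))) m
      simpa [Function.iterate_succ_apply] using this
  intro k m
  have hlim2 : Tendsto (fun N => (-1:ℝ)^k * DeltaSeq^[k] (F N) m) atTop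
      (nhds ((-1:ℝ)^k * DeltaSeq^[k] f m)) := (key k f F hlim m).const_mul _
  exact le_of_tendsto_of_tendsto tendsto_const_nhds hlim2
    (Filter.Eventually.of_forall fun N => hF N k m)

lemma cm_pow {f : ℕ → ℝ} (hf : CM f) (ν : ℕ) : CM (fun m => f m ^ ν) := by
  induction ν with
  | zero => simpa using cm_const 1 zero_le_one
  | succ ν ih =>
    intro k m
    rw [iter_congr k (f := fun m => f m ^ (ν+1)) (g := fun m => f m * f m ^ ν)
      (fun m => by ring)]
    exact cm_mul hf ih k m

lemma cm_geom {g : ℕ → ℝ} (hg : CM g) (hg0 : g 0 < 1) : CM (fun m => (1 - g m)⁻¹) := by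
  have hge : ∀ m, 0 ≤ g m := cm_nonneg hg
  have hlt : ∀ m, g m < 1 := fun m => lt_of_le_of_lt (cm_antitone hg m) hg0
  apply cm_tendsto (F := fun N m => ∑ ν ∈ Finset.range N, g m ^ ν)
  · intro N
    induction N with
    | zero => simpa using cm_const 0 le_rfl
    | succ N ih =>
      intro k m
      rw [iter_congr k (f := fun m => ∑ ν ∈ Finset.range (N+1), g m ^ ν)
        (g := fun m => (∑ ν ∈ Finset.range N, g m ^ ν) + g m ^ N)
        (fun m => by simp [Finset.sum_range_succ])]
      exact cm_add ih (cm_pow hg N) k m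
  · intro m
    exact (hasSum_geometric_of_lt_one (hge m) (hlt m)).tendsto_sum_nat



lemma iter_invLin (α : ℝ) (hα : 0 < α) (k : ℕ) :
    ∀ m : ℕ, DeltaSeq^[k] (fun m : ℕ => ((m : ℝ) + α)⁻¹) m
      = (-1)^k * (k.factorial : ℝ) * (∏ l ∈ Finset.range (k+1), ((m:ℝ) + α + l))⁻¹ := by
  induction k with
  | zero => intro m; simp
  | succ k ih =>
    intro m
    rw [Function.iterate_succ_apply']
    have hpos : ∀ (x : ℝ), 0 ≤ x → ∀ n : ℕ, (0:ℝ) < ∏ l ∈ Finset.range n, (x + α + l) := by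
      intro x hx n
      apply Finset.prod_pos
      intro l _
      positivity
    simp only [DeltaSeq, ih]
    have e1 : ∏ l ∈ Finset.range (k+1), (((m:ℕ):ℝ) + 1 + α + l)
        = ∏ l ∈ Finset.range (k+1), ((m:ℝ) + α + (l+1)) := by
      apply Finset.prod_congr rfl; intro l _; push_cast; ring
    have e2 : ∏ l ∈ Finset.range (k+2), ((m:ℝ) + α + l)
        = ((m:ℝ) + α) * ∏ l ∈ Finset.range (k+1), ((m:ℝ) + α + (l+1)) := by
      rw [Finset.prod_range_succ' (fun l => ((m:ℝ) + α + l)) (k+1)]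
      push_cast; ring
    have e3 : ∏ l ∈ Finset.range (k+2), ((m:ℝ) + α + l)
        = (∏ l ∈ Finset.range (k+1), ((m:ℝ) + α + l)) * ((m:ℝ) + α + (k+1)) := by
      rw [Finset.prod_range_succ]; push_cast; ring
    set P : ℝ := ∏ l ∈ Finset.range (k+1), ((m:ℝ) + α + (l+1)) with hP
    set Q : ℝ := ∏ l ∈ Finset.range (k+1), ((m:ℝ) + α + l) with hQ
    have hQpos : (0:ℝ) < Q := hpos m (by positivity) (k+1)
    have hPpos : (0:ℝ) < P := by
      rw [hP]
      apply Finset.prod_pos; intro l _; positivity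
    have hma : (0:ℝ) < (m:ℝ) + α := by positivity
    have hrel : P * ((m:ℝ) + α) = Q * ((m:ℝ) + α + (k+1)) := by
      rw [mul_comm P _, ← e2, e3]
    have h4 : (0:ℝ) < (m:ℝ) + α + (k+1) := by positivity
    have hQinv : Q⁻¹ = ((m:ℝ) + α + (k+1)) / (P * ((m:ℝ) + α)) := by
      rw [eq_div_iff (by positivity), inv_mul_eq_div, div_eq_iff hQpos.ne']
      linear_combination hrel
    push_cast [e1]
    rw [e2, hQinv, Nat.factorial_succ]
    push_cast
    field_simp
    ring

lemma cm_invLin (α : ℝ) (hα : 0 < α) : CM (fun m : ℕ => ((m : ℝ) + α)⁻¹) := by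
  intro k m
  rw [iter_invLin α hα k m]
  have hpos : (0:ℝ) < ∏ l ∈ Finset.range (k+1), ((m:ℝ) + α + l) := by
    apply Finset.prod_pos; intro l _; positivity
  have : (-1:ℝ)^k * ((-1)^k * (k.factorial : ℝ) *
      (∏ l ∈ Finset.range (k+1), ((m:ℝ) + α + l))⁻¹)
      = ((-1)^k)^2 * (k.factorial : ℝ) * (∏ l ∈ Finset.range (k+1), ((m:ℝ) + α + l))⁻¹ := by
    ring
  rw [this, ← pow_mul, mul_comm k 2, pow_mul, neg_one_sq, one_pow, one_mul]
  positivity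


lemma cm_congr {f g : ℕ → ℝ} (h : ∀ m, f m = g m) (hf : CM f) : CM g := by
  intro k m
  rw [← iter_congr k h m]
  exact hf k m

lemma cm_sum {ι : Type*} (s : Finset ι) (F : ι → ℕ → ℝ) (hF : ∀ i ∈ s, CM (F i)) :
    CM (fun m => ∑ i ∈ s, F i m) := by
  induction s using Finset.cons_induction with
  | empty => simpa using cm_const 0 le_rfl
  | cons i s his ih =>
    exact cm_congr (fun m => (Finset.sum_cons his).symm)
      (cm_add (hF i (Finset.mem_cons_self i s))
        (ih (fun j hj => hF j (Finset.mem_cons_of_mem hj))))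

lemma slice1 (i : ℕ) : ∀ (F : ℕ → ℕ → ℝ) (m n : ℕ),
    (Delta1^[i] F) m n = DeltaSeq^[i] (fun m => F m n) m := by
  induction i with
  | zero => intro F m n; rfl
  | succ i ih =>
    intro F m n
    rw [Function.iterate_succ_apply, Function.iterate_succ_apply]
    rw [ih (Delta1 F) m n]
    exact iter_congr i (f := fun m => Delta1 F m n) (g := DeltaSeq fun m => F m n)
      (fun m => rfl) m

lemma slice2 (j : ℕ) : ∀ (x : ℕ → ℕ → ℝ) (m n : ℕ),
    (Delta2^[j] x) m n = DeltaSeq^[j] (fun n => x m n) n := by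
  induction j with
  | zero => intro x m n; rfl
  | succ j ih =>
    intro x m n
    rw [Function.iterate_succ_apply, Function.iterate_succ_apply]
    rw [ih (Delta2 x) m n]
    exact iter_congr j (f := fun n => Delta2 x m n) (g := DeltaSeq fun n => x m n)
      (fun n => rfl) n


lemma key_exists (k : ℕ) (hk : 1 < k) (a b : ℕ → ℝ)
    (ha0 : 0 < a 0) (hb0 : 0 < b 0)
    (hapos : ∀ i ∈ Finset.Icc 1 (k - 1), 0 < a i)
    (hbpos : ∀ j ∈ Finset.Icc 1 k, 0 < b j)
    (hadist : ∀ i ∈ Finset.Icc 1 (k - 1), ∀ j ∈ Finset.Icc 1 (k - 1), i ≠ j → a i ≠ a j)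
    (habdist : ∀ i ∈ Finset.Icc 1 (k - 1), ∀ j ∈ Finset.Icc 1 k, a i ≠ b j)
    (hinter : ∀ i ∈ Finset.Icc 1 (k - 1), b i ≤ a i ∧ a i ≤ b (i + 1)) :
    ∃ d : ℝ, ∃ ρ : ℕ → ℝ, 0 < d ∧ (∀ j ∈ Finset.Icc 1 (k-1), 0 < ρ j) ∧
      ∀ x : ℝ, b 0 * ∏ i ∈ Finset.Icc 1 k, (x + b i)
        = b 0 * (x + d) * ∏ i ∈ Finset.Icc 1 (k-1), (x + a i)
          - ∑ j ∈ Finset.Icc 1 (k-1), ρ j * ∏ i ∈ (Finset.Icc 1 (k-1)).erase j, (x + a i) := by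
  -- strict inequalities
  have hstrict : ∀ i ∈ Finset.Icc 1 (k-1), b i < a i ∧ a i < b (i+1) := by
    intro i hi
    have h1 := hinter i hi
    have hik : i ∈ Finset.Icc 1 k := by
      simp only [Finset.mem_Icc] at hi ⊢; omega
    have hik1 : i + 1 ∈ Finset.Icc 1 k := by
      simp only [Finset.mem_Icc] at hi ⊢; omega
    exact ⟨lt_of_le_of_ne h1.1 (fun h => habdist i hi i hik h.symm),
      lt_of_le_of_ne h1.2 (habdist i hi (i+1) hik1)⟩
  have hbstep : ∀ i, 1 ≤ i → i + 1 ≤ k → b i < b (i+1) := by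
    intro i h1 h2
    have hi : i ∈ Finset.Icc 1 (k-1) := by simp only [Finset.mem_Icc]; omega
    exact lt_trans (hstrict i hi).1 (hstrict i hi).2
  have hbmono : ∀ j, ∀ i, 1 ≤ i → i < j → j ≤ k → b i < b j := by
    intro j
    induction j with
    | zero => omega
    | succ j ih =>
      intro i h1 h2 h3
      rcases Nat.lt_succ_iff_lt_or_eq.mp h2 with h | h
      · exact lt_trans (ih i h1 h (by omega)) (hbstep j (by omega) h3)
      · subst h; exact hbstep i h1 h3
  have hastep : ∀ i, 1 ≤ i → i + 1 ≤ k - 1 → a i < a (i+1) := by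
    intro i h1 h2
    have hi : i ∈ Finset.Icc 1 (k-1) := by simp only [Finset.mem_Icc]; omega
    have hi1 : i + 1 ∈ Finset.Icc 1 (k-1) := by simp only [Finset.mem_Icc]; omega
    exact lt_trans (hstrict i hi).2 (hstrict (i+1) hi1).1
  have hamono : ∀ j, ∀ i, 1 ≤ i → i < j → j ≤ k - 1 → a i < a j := by
    intro j
    induction j with
    | zero => omega
    | succ j ih =>
      intro i h1 h2 h3
      rcases Nat.lt_succ_iff_lt_or_eq.mp h2 with h | h
      · exact lt_trans (ih i h1 h (by omega)) (hastep j (by omega) h3)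
      · subst h; exact hastep i h1 h3
  have hba : ∀ j ∈ Finset.Icc 1 (k-1), ∀ i, 1 ≤ i → i ≤ j → b i < a j := by
    intro j hj i h1 h2
    simp only [Finset.mem_Icc] at hj
    rcases eq_or_lt_of_le h2 with h | h
    · subst h; exact (hstrict i (by simp only [Finset.mem_Icc]; omega)).1
    · exact lt_trans (hbmono j i h1 h (by omega)) (hstrict j (by simp only [Finset.mem_Icc]; omega)).1
  have hab : ∀ j ∈ Finset.Icc 1 (k-1), ∀ i, j + 1 ≤ i → i ≤ k → a j < b i := by
    intro j hj i h1 h2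
    simp only [Finset.mem_Icc] at hj
    have h3 : a j < b (j+1) := (hstrict j (by simp only [Finset.mem_Icc]; omega)).2
    rcases eq_or_lt_of_le h1 with h | h
    · subst h; exact h3
    · exact lt_trans h3 (hbmono i (j+1) (by omega) h h2)
  -- the gap d
  set d : ℝ := (∑ i ∈ Finset.Icc 1 k, b i) - (∑ i ∈ Finset.Icc 1 (k-1), a i) with hd_def
  have hIoc : Finset.Icc 1 (k-1) = Finset.Ioc 0 (k-1) := by
    rw [← Finset.Icc_add_one_left_eq_Ioc]; rfl
  have hIocK : Finset.Icc 1 k = Finset.Ioc 0 k := by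
    rw [← Finset.Icc_add_one_left_eq_Ioc]; rfl
  have hsumb : ∑ i ∈ Finset.Icc 1 k, b i = b 1 + ∑ i ∈ Finset.Ioc 0 (k-1), b (i+1) := by
    have h1 : ∑ i ∈ Finset.Ioc 0 (k-1), b (i+1)
        = ∑ i ∈ (Finset.Ioc 0 (k-1)).map (addRightEmbedding 1), b i := by
      rw [Finset.sum_map]; rfl
    rw [h1, Finset.map_add_right_Ioc]
    have h2 : k - 1 + 1 = k := by omega
    rw [h2]
    have h3 : Finset.Icc 1 k = insert 1 (Finset.Ioc 1 k) := by
      rw [Finset.Ioc_insert_left (by omega)]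
    rw [h3, Finset.sum_insert (by simp), Nat.zero_add]
  have hd : 0 < d := by
    rw [hd_def, hsumb, hIoc, add_sub_assoc, ← Finset.sum_sub_distrib]
    have : 0 ≤ ∑ i ∈ Finset.Ioc 0 (k-1), (b (i+1) - a i) := by
      apply Finset.sum_nonneg
      intro i hi
      simp only [Finset.mem_Ioc] at hi
      have := (hstrict i (by simp only [Finset.mem_Icc]; omega)).2
      linarith
    have hb1 : 0 < b 1 := hbpos 1 (by simp only [Finset.mem_Icc]; omega)
    linarith
  -- the residues
  set ρ : ℕ → ℝ := fun j => -(b 0) * (∏ i ∈ Finset.Icc 1 k, (b i - a j)) *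
    (∏ i ∈ (Finset.Icc 1 (k-1)).erase j, (a i - a j))⁻¹ with hρ_def
  have signprod : ∀ (s : Finset ℕ) (f : ℕ → ℝ),
      ∏ i ∈ s, (-(f i)) = (-1)^(s.card) * ∏ i ∈ s, f i := by
    intro s f
    rw [show (fun i => -(f i)) = (fun i => (-1) * f i) from funext fun i => by ring,
      Finset.prod_mul_distrib, Finset.prod_const]
  have hρpos : ∀ j ∈ Finset.Icc 1 (k-1), 0 < ρ j := by
    intro j hj
    have hj' : 1 ≤ j ∧ j ≤ k - 1 := by simpa using hj
    -- numerator split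
    have hNsplit : (∏ i ∈ Finset.Ioc 0 j, (b i - a j)) * (∏ i ∈ Finset.Ioc j k, (b i - a j))
        = ∏ i ∈ Finset.Icc 1 k, (b i - a j) := by
      rw [hIocK]; exact Finset.prod_Ioc_consecutive _ (by omega) (by omega)
    have hN1 : ∏ i ∈ Finset.Ioc 0 j, (b i - a j)
        = (-1)^j * ∏ i ∈ Finset.Ioc 0 j, (a j - b i) := by
      rw [show (fun i => b i - a j) = (fun i => -((fun i => a j - b i) i)) from
        funext fun i => by ring]
      rw [signprod]
      simp [Nat.card_Ioc]
    have hN1pos : 0 < ∏ i ∈ Finset.Ioc 0 j, (a j - b i) := by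
      apply Finset.prod_pos
      intro i hi
      simp only [Finset.mem_Ioc] at hi
      have := hba j hj i (by omega) hi.2
      linarith
    have hN2pos : 0 < ∏ i ∈ Finset.Ioc j k, (b i - a j) := by
      apply Finset.prod_pos
      intro i hi
      simp only [Finset.mem_Ioc] at hi
      have := hab j hj i (by omega) hi.2
      linarith
    -- denominator split
    have herase : (Finset.Icc 1 (k-1)).erase j = Finset.Ioc 0 (j-1) ∪ Finset.Ioc j (k-1) := by
      ext i
      simp only [Finset.mem_erase, Finset.mem_Icc, Finset.mem_union, Finset.mem_Ioc]
      omega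
    have hdisj : Disjoint (Finset.Ioc 0 (j-1)) (Finset.Ioc j (k-1)) := by
      rw [Finset.disjoint_left]
      intro i hi hi'
      simp only [Finset.mem_Ioc] at hi hi'
      omega
    have hDsplit : ∏ i ∈ (Finset.Icc 1 (k-1)).erase j, (a i - a j)
        = (∏ i ∈ Finset.Ioc 0 (j-1), (a i - a j)) * (∏ i ∈ Finset.Ioc j (k-1), (a i - a j)) := by
      rw [herase, Finset.prod_union hdisj]
    have hD1 : ∏ i ∈ Finset.Ioc 0 (j-1), (a i - a j)
        = (-1)^(j-1) * ∏ i ∈ Finset.Ioc 0 (j-1), (a j - a i) := by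
      rw [show (fun i => a i - a j) = (fun i => -((fun i => a j - a i) i)) from
        funext fun i => by ring]
      rw [signprod]
      simp [Nat.card_Ioc]
    have hD1pos : 0 < ∏ i ∈ Finset.Ioc 0 (j-1), (a j - a i) := by
      apply Finset.prod_pos
      intro i hi
      simp only [Finset.mem_Ioc] at hi
      have := hamono j i (by omega) (by omega) (by omega)
      linarith
    have hD2pos : 0 < ∏ i ∈ Finset.Ioc j (k-1), (a i - a j) := by
      apply Finset.prod_pos
      intro i hi
      simp only [Finset.mem_Ioc] at hi
      have := hamono i j (by omega) (by omega) (by omega)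
      linarith
    obtain ⟨j', rfl⟩ : ∃ j', j = j' + 1 := ⟨j - 1, by omega⟩
    have hj'e : j' + 1 - 1 = j' := by omega
    set N : ℝ := (∏ i ∈ Finset.Ioc 0 (j'+1), (a (j'+1) - b i)) *
      (∏ i ∈ Finset.Ioc (j'+1) k, (b i - a (j'+1))) with hN_def
    have hNpos : 0 < N := mul_pos hN1pos hN2pos
    set D : ℝ := (∏ i ∈ Finset.Ioc 0 j', (a (j'+1) - a i)) *
      (∏ i ∈ Finset.Ioc (j'+1) (k-1), (a i - a (j'+1))) with hD_def
    have hDpos : 0 < D := by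
      rw [hj'e] at hD1pos
      exact mul_pos hD1pos hD2pos
    have hNval : ∏ i ∈ Finset.Icc 1 k, (b i - a (j'+1)) = (-1)^(j'+1) * N := by
      rw [← hNsplit, hN1, hN_def]; ring
    have hDval : ∏ i ∈ (Finset.Icc 1 (k-1)).erase (j'+1), (a i - a (j'+1))
        = (-1)^j' * D := by
      rw [hDsplit, hD1, hj'e, hD_def]; ring
    have hsq : ((-1:ℝ)^j') * ((-1:ℝ)^j') = 1 := by
      rw [← pow_add]; exact Even.neg_one_pow ⟨j', rfl⟩
    have hval : ρ (j'+1) = b 0 * N * D⁻¹ := by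
      rw [hρ_def]
      simp only []
      rw [hNval, hDval, mul_inv, show ((-1:ℝ)^j')⁻¹ = (-1:ℝ)^j' from
        inv_eq_of_mul_eq_one_right hsq]
      rw [pow_succ]
      field_simp
      linear_combination hsq
    rw [hval]
    positivity
  refine ⟨d, ρ, hd, hρpos, ?_⟩
  intro x
  set S := Finset.Icc 1 (k-1) with hS
  set Pb : Polynomial ℝ := ∏ i ∈ Finset.Icc 1 k, (Polynomial.X + Polynomial.C (b i)) with hPb
  set Pa : Polynomial ℝ := ∏ i ∈ S, (Polynomial.X + Polynomial.C (a i)) with hPa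
  set c' : ℕ → ℝ := fun i => if i = k then d else a i with hc'
  have hknotS : k ∉ S := by
    simp only [hS, Finset.mem_Icc]; omega
  have hins : Finset.Icc 1 k = insert k S := by
    ext i; simp only [hS, Finset.mem_Icc, Finset.mem_insert]; omega
  have hQ : (Polynomial.X + Polynomial.C d) * Pa
      = ∏ i ∈ Finset.Icc 1 k, (Polynomial.X + Polynomial.C (c' i)) := by
    rw [hins, Finset.prod_insert hknotS]
    congr 1
    · simp [hc']
    · apply Finset.prod_congr rfl
      intro i hi
      have : i ≠ k := fun h => hknotS (h ▸ hi)
      simp [hc', this]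
  have hcard : (Finset.Icc 1 k).card = k := by rw [Nat.card_Icc]; omega
  have hcardS : S.card = k - 1 := by rw [hS, Nat.card_Icc]; omega
  have hmonic : ∀ (f : ℕ → ℝ),
      (∏ i ∈ Finset.Icc 1 k, (Polynomial.X + Polynomial.C (f i))).Monic := fun f =>
    Polynomial.monic_prod_of_monic _ _ (fun i _ => Polynomial.monic_X_add_C (f i))
  have hnd : ∀ (f : ℕ → ℝ),
      (∏ i ∈ Finset.Icc 1 k, (Polynomial.X + Polynomial.C (f i))).natDegree = k := by
    intro f
    rw [Polynomial.natDegree_prod_of_monic _ _ (fun i _ => Polynomial.monic_X_add_C (f i))]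
    simp [Polynomial.natDegree_X_add_C, hcard]
  have hcoefftop : ∀ (f : ℕ → ℝ),
      (∏ i ∈ Finset.Icc 1 k, (Polynomial.X + Polynomial.C (f i))).coeff k = 1 := by
    intro f
    have := (hmonic f).coeff_natDegree
    rwa [hnd f] at this
  have hcoeffnext : ∀ (f : ℕ → ℝ),
      (∏ i ∈ Finset.Icc 1 k, (Polynomial.X + Polynomial.C (f i))).coeff (k-1)
        = ∑ i ∈ Finset.Icc 1 k, f i := by
    intro f
    rw [Finset.prod_X_add_C_coeff _ _ (by rw [hcard]; omega : k - 1 ≤ (Finset.Icc 1 k).card)]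
    rw [show (Finset.Icc 1 k).card - (k-1) = 1 by rw [hcard]; omega]
    rw [Finset.powersetCard_one, Finset.sum_map]
    apply Finset.sum_congr rfl
    intro i _
    simp
  set R : Polynomial ℝ := Pb - (Polynomial.X + Polynomial.C d) * Pa with hR
  have hRcoeff : ∀ m : ℕ, k - 1 ≤ m → R.coeff m = 0 := by
    intro m hm
    rw [hR, Polynomial.coeff_sub, hQ]
    rcases Nat.lt_or_ge m (k-1+1) with h | h
    · have hm' : m = k - 1 := by omega
      subst hm'
      rw [hcoeffnext, hcoeffnext]
      have h4 : ∑ i ∈ Finset.Icc 1 k, c' i = d + ∑ i ∈ S, a i := by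
        rw [hins, Finset.sum_insert hknotS]
        congr 1
        · simp [hc']
        · apply Finset.sum_congr rfl
          intro i hi
          have : i ≠ k := fun h => hknotS (h ▸ hi)
          simp [hc', this]
      rw [h4, hd_def]
      ring
    · rcases Nat.lt_or_ge k m with h2 | h2
      · rw [Polynomial.coeff_eq_zero_of_natDegree_lt (by rw [hnd]; exact h2),
          Polynomial.coeff_eq_zero_of_natDegree_lt (by rw [hnd]; exact h2), sub_self]
      · have hm' : m = k := by omega
        subst hm'
        rw [hcoefftop, hcoefftop, sub_self]
  have hdeg : R.degree < ((k - 1 : ℕ) : WithBot ℕ) :=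
    (Polynomial.degree_lt_iff_coeff_zero R (k-1)).mpr (fun m hm => hRcoeff m hm)
  set v : ℕ → ℝ := fun i => -(a i) with hv
  have hinj : Set.InjOn v ↑S := by
    intro i hi j hj hij
    by_contra hne
    exact hadist i hi j hj hne (neg_inj.mp hij)
  have hdeg' : R.degree < (S.card : WithBot ℕ) := by rwa [hcardS]
  have hR2 : R = Lagrange.interpolate S v (fun i => R.eval (v i)) :=
    Lagrange.eq_interpolate hinj hdeg'
  -- evaluate everything at x
  have hbasis : ∀ j ∈ S, (Lagrange.basis S v j).eval x
      = (∏ i ∈ S.erase j, (a i - a j))⁻¹ * ∏ i ∈ S.erase j, (x + a i) := by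
    intro j hj
    rw [Lagrange.basis, Polynomial.eval_prod, ← Finset.prod_inv_distrib,
      ← Finset.prod_mul_distrib]
    apply Finset.prod_congr rfl
    intro i hi
    have hii : v j - v i = a i - a j := by rw [hv]; ring
    have hvi : v i = -(a i) := rfl
    rw [Lagrange.basisDivisor, Polynomial.eval_mul, Polynomial.eval_C, Polynomial.eval_sub,
      Polynomial.eval_X, Polynomial.eval_C, hii, hvi]
    ring
  have hReval : ∀ j ∈ S, Polynomial.eval (v j) R = ∏ i ∈ Finset.Icc 1 k, (b i - a j) := by
    intro j hj
    have hzero : Polynomial.eval (v j) Pa = 0 := by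
      rw [hPa, Polynomial.eval_prod]
      exact Finset.prod_eq_zero hj (by simp [hv])
    rw [hR, Polynomial.eval_sub, Polynomial.eval_mul, hzero, mul_zero, sub_zero, hPb,
      Polynomial.eval_prod]
    apply Finset.prod_congr rfl
    intro i _
    simp only [Polynomial.eval_add, Polynomial.eval_X, Polynomial.eval_C, hv]
    ring
  have e1 : Polynomial.eval x Pb = ∏ i ∈ Finset.Icc 1 k, (x + b i) := by
    rw [hPb, Polynomial.eval_prod]; apply Finset.prod_congr rfl; intro i _; simp
  have e2 : Polynomial.eval x Pa = ∏ i ∈ S, (x + a i) := by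
    rw [hPa, Polynomial.eval_prod]; apply Finset.prod_congr rfl; intro i _; simp
  have heval2 : (∏ i ∈ Finset.Icc 1 k, (x + b i)) - (x + d) * ∏ i ∈ S, (x + a i)
      = ∑ j ∈ S, (∏ i ∈ Finset.Icc 1 k, (b i - a j)) *
          ((∏ i ∈ S.erase j, (a i - a j))⁻¹ * ∏ i ∈ S.erase j, (x + a i)) := by
    have e3 : Polynomial.eval x R
        = (∏ i ∈ Finset.Icc 1 k, (x + b i)) - (x + d) * ∏ i ∈ S, (x + a i) := by
      rw [hR, Polynomial.eval_sub, Polynomial.eval_mul, Polynomial.eval_add, Polynomial.eval_X,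
        Polynomial.eval_C, e1, e2]
    have heval := congrArg (Polynomial.eval x) hR2
    rw [Lagrange.interpolate_apply, Polynomial.eval_finset_sum] at heval
    rw [← e3, heval]
    apply Finset.sum_congr rfl
    intro j hj
    rw [Polynomial.eval_mul, Polynomial.eval_C, hbasis j hj, hReval j hj]
  have hsum : ∑ j ∈ S, ρ j * ∏ i ∈ S.erase j, (x + a i)
      = - (b 0 * ((∏ i ∈ Finset.Icc 1 k, (x + b i)) - (x + d) * ∏ i ∈ S, (x + a i))) := by
    rw [heval2, Finset.mul_sum, ← Finset.sum_neg_distrib]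
    apply Finset.sum_congr rfl
    intro j hj
    rw [hρ_def]
    ring
  rw [hsum]
  ring

-- the F_c lemma
lemma cm_F (k : ℕ) (hk : 1 < k) (a b : ℕ → ℝ)
    (ha0 : 0 < a 0) (hb0 : 0 < b 0)
    (hapos : ∀ i ∈ Finset.Icc 1 (k - 1), 0 < a i)
    (hbpos : ∀ j ∈ Finset.Icc 1 k, 0 < b j)
    (hadist : ∀ i ∈ Finset.Icc 1 (k - 1), ∀ j ∈ Finset.Icc 1 (k - 1), i ≠ j → a i ≠ a j)
    (habdist : ∀ i ∈ Finset.Icc 1 (k - 1), ∀ j ∈ Finset.Icc 1 k, a i ≠ b j)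
    (hinter : ∀ i ∈ Finset.Icc 1 (k - 1), b i ≤ a i ∧ a i ≤ b (i + 1))
    (c : ℝ) (hc : 0 ≤ c) :
    CM (fun m : ℕ =>
      (b 0 * (∏ i ∈ Finset.Icc 1 k, ((m:ℝ) + b i))
          + c * (a 0 * ∏ i ∈ Finset.Icc 1 (k-1), ((m:ℝ) + a i)))⁻¹
        * (a 0 * ∏ i ∈ Finset.Icc 1 (k-1), ((m:ℝ) + a i))) := by
  obtain ⟨d, ρ, hd, hρpos, hkey⟩ :=
    key_exists k hk a b ha0 hb0 hapos hbpos hadist habdist hinter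
  set S := Finset.Icc 1 (k-1) with hS
  set t : ℝ := d + c * a 0 / b 0 with ht_def
  have ht : 0 < t := by
    have : 0 ≤ c * a 0 / b 0 := by positivity
    rw [ht_def]; linarith
  set g : ℕ → ℝ := fun m => ∑ j ∈ S, (ρ j / b 0) * (((m:ℝ) + a j)⁻¹ * ((m:ℝ) + t)⁻¹)
    with hg_def
  have hapos' : ∀ j ∈ S, (0:ℝ) < a j := hapos
  have hgCM : CM g := by
    apply cm_congr (f := fun m => ∑ j ∈ S,
      (fun j m => (ρ j / b 0) * (((m:ℝ) + a j)⁻¹ * ((m:ℝ) + t)⁻¹)) j m) (fun m => rfl)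
    apply cm_sum
    intro j hj
    exact cm_smul (div_nonneg (hρpos j hj).le hb0.le) (cm_mul (cm_invLin (a j) (hapos' j hj)) (cm_invLin t ht))
  have hPpos : ∀ m : ℕ, (0:ℝ) < ∏ i ∈ S, ((m:ℝ) + a i) := by
    intro m
    apply Finset.prod_pos
    intro i hi
    have := hapos' i hi
    positivity
  have hBApos : ∀ m : ℕ, (0:ℝ) < b 0 * (∏ i ∈ Finset.Icc 1 k, ((m:ℝ) + b i))
      + c * (a 0 * ∏ i ∈ S, ((m:ℝ) + a i)) := by
    intro m
    have h1 : (0:ℝ) < ∏ i ∈ Finset.Icc 1 k, ((m:ℝ) + b i) := by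
      apply Finset.prod_pos
      intro i hi
      have := hbpos i hi
      positivity
    have h2 := hPpos m
    have : (0:ℝ) ≤ c * (a 0 * ∏ i ∈ S, ((m:ℝ) + a i)) := by positivity
    nlinarith
  have hBc : ∀ m : ℕ, b 0 * (∏ i ∈ Finset.Icc 1 k, ((m:ℝ) + b i))
      + c * (a 0 * ∏ i ∈ S, ((m:ℝ) + a i))
      = b 0 * ((m:ℝ) + t) * (∏ i ∈ S, ((m:ℝ) + a i)) * (1 - g m) := by
    intro m
    have hx := hkey (m:ℝ)
    have ht' : b 0 * t = b 0 * d + c * a 0 := by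
      rw [ht_def]; field_simp
    have hgm : b 0 * ((m:ℝ) + t) * (∏ i ∈ S, ((m:ℝ) + a i)) * g m
        = ∑ j ∈ S, ρ j * ∏ i ∈ S.erase j, ((m:ℝ) + a i) := by
      rw [hg_def, Finset.mul_sum]
      apply Finset.sum_congr rfl
      intro j hj
      have hPj : (∏ i ∈ S, ((m:ℝ) + a i)) = (∏ i ∈ S.erase j, ((m:ℝ) + a i)) * ((m:ℝ) + a j) := by
        rw [Finset.prod_erase_mul S _ hj]
      have hma : (0:ℝ) < (m:ℝ) + a j := by
        have := hapos' j hj; positivity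
      have hmt : (0:ℝ) < (m:ℝ) + t := by positivity
      rw [hPj]
      field_simp
    rw [hS] at hx ⊢
    linear_combination hx + hgm - (∏ i ∈ Finset.Icc 1 (k-1), ((m:ℝ) + a i)) * ht'
  have hglt : g 0 < 1 := by
    have h0 := hBc 0
    have h1 := hBApos 0
    have h2 : (0:ℝ) < b 0 * ((0:ℕ):ℝ) + t := by push_cast; positivity
    have h3 : (0:ℝ) < b 0 * (((0:ℕ):ℝ) + t) * (∏ i ∈ S, (((0:ℕ):ℝ) + a i)) := by
      have := hPpos 0
      positivity
    nlinarith [h0, h1, h3]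
  have hF : ∀ m : ℕ,
      (b 0 * (∏ i ∈ Finset.Icc 1 k, ((m:ℝ) + b i))
          + c * (a 0 * ∏ i ∈ S, ((m:ℝ) + a i)))⁻¹
        * (a 0 * ∏ i ∈ S, ((m:ℝ) + a i))
      = (a 0 / b 0) * (((m:ℝ) + t)⁻¹ * (1 - g m)⁻¹) := by
    intro m
    rw [hBc m]
    have h1 := hPpos m
    have hmt : (0:ℝ) < (m:ℝ) + t := by positivity
    have hgm1 : 1 - g m ≠ 0 := by
      have h0 := hBc m
      have h2 := hBApos m
      intro hzero
      rw [hzero, mul_zero] at h0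
      linarith
    field_simp
  exact cm_congr (fun m => (hF m).symm)
    (cm_smul (by positivity) (cm_mul (cm_invLin t ht) (cm_geom hgCM hglt)))


lemma cm_T (k : ℕ) (hk : 1 < k) (a b : ℕ → ℝ)
    (ha0 : 0 < a 0) (hb0 : 0 < b 0)
    (hapos : ∀ i ∈ Finset.Icc 1 (k - 1), 0 < a i)
    (hbpos : ∀ j ∈ Finset.Icc 1 k, 0 < b j)
    (hadist : ∀ i ∈ Finset.Icc 1 (k - 1), ∀ j ∈ Finset.Icc 1 (k - 1), i ≠ j → a i ≠ a j)
    (habdist : ∀ i ∈ Finset.Icc 1 (k - 1), ∀ j ∈ Finset.Icc 1 k, a i ≠ b j)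
    (hinter : ∀ i ∈ Finset.Icc 1 (k - 1), b i ≤ a i ∧ a i ≤ b (i + 1))
    (j n : ℕ) :
    CM (fun m : ℕ => (-1:ℝ)^j * (Delta2^[j] (fun m n : ℕ =>
      1 / ((b 0 * ∏ j ∈ Finset.Icc 1 k, ((m : ℝ) + b j)) +
            (a 0 * ∏ j ∈ Finset.Icc 1 (k - 1), ((m : ℝ) + a j)) * n))) m n) := by
  have hApos : ∀ m : ℕ, (0:ℝ) < a 0 * ∏ i' ∈ Finset.Icc 1 (k-1), ((m:ℝ) + a i') := by
    intro m
    apply mul_pos ha0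
    apply Finset.prod_pos
    intro i' hi'
    have := hapos i' hi'
    positivity
  have hBpos : ∀ m : ℕ, (0:ℝ) < b 0 * ∏ i' ∈ Finset.Icc 1 k, ((m:ℝ) + b i') := by
    intro m
    apply mul_pos hb0
    apply Finset.prod_pos
    intro i' hi'
    have := hbpos i' hi'
    positivity
  have hsqj : (-1:ℝ)^j * (-1:ℝ)^j = 1 := by
    rw [← pow_add]; exact Even.neg_one_pow ⟨j, rfl⟩
  have hXeq : ∀ m n' : ℕ,
      1 / ((b 0 * ∏ j ∈ Finset.Icc 1 k, ((m : ℝ) + b j)) +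
            (a 0 * ∏ j ∈ Finset.Icc 1 (k - 1), ((m : ℝ) + a j)) * n')
      = (a 0 * ∏ i' ∈ Finset.Icc 1 (k-1), ((m:ℝ) + a i'))⁻¹ *
          ((n':ℝ) + (b 0 * ∏ i' ∈ Finset.Icc 1 k, ((m:ℝ) + b i'))
            / (a 0 * ∏ i' ∈ Finset.Icc 1 (k-1), ((m:ℝ) + a i')))⁻¹ := by
    intro m n'
    have hA := hApos m
    have hB := hBpos m
    have h1 : (a 0 * ∏ i' ∈ Finset.Icc 1 (k-1), ((m:ℝ) + a i')) *
        (((n':ℝ) + (b 0 * ∏ i' ∈ Finset.Icc 1 k, ((m:ℝ) + b i'))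
          / (a 0 * ∏ i' ∈ Finset.Icc 1 (k-1), ((m:ℝ) + a i'))))
        = (b 0 * ∏ j ∈ Finset.Icc 1 k, ((m : ℝ) + b j)) +
            (a 0 * ∏ j ∈ Finset.Icc 1 (k - 1), ((m : ℝ) + a j)) * n' := by
      rw [mul_add, mul_div_assoc', mul_div_right_comm, div_self hA.ne', one_mul]
      ring
    rw [one_div, ← h1, mul_inv]
  have hform : ∀ m : ℕ, (Delta2^[j] (fun m n : ℕ =>
      1 / ((b 0 * ∏ j ∈ Finset.Icc 1 k, ((m : ℝ) + b j)) +
            (a 0 * ∏ j ∈ Finset.Icc 1 (k - 1), ((m : ℝ) + a j)) * n))) m n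
      = (a 0 * ∏ i' ∈ Finset.Icc 1 (k-1), ((m:ℝ) + a i'))⁻¹ *
        ((-1)^j * (j.factorial : ℝ) *
          (∏ l ∈ Finset.range (j+1), ((n:ℝ) +
            (b 0 * ∏ i' ∈ Finset.Icc 1 k, ((m:ℝ) + b i'))
              / (a 0 * ∏ i' ∈ Finset.Icc 1 (k-1), ((m:ℝ) + a i')) + l))⁻¹) := by
    intro m
    rw [slice2 j _ m n]
    rw [iter_congr j (hXeq m) n]
    rw [iter_smul j _ _ n]
    rw [iter_invLin _ (div_pos (hBpos m) (hApos m)) j n]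
  intro kk mm
  have hTeq : ∀ m : ℕ, (-1:ℝ)^j * (Delta2^[j] (fun m n : ℕ =>
      1 / ((b 0 * ∏ j ∈ Finset.Icc 1 k, ((m : ℝ) + b j)) +
            (a 0 * ∏ j ∈ Finset.Icc 1 (k - 1), ((m : ℝ) + a j)) * n))) m n
      = (j.factorial : ℝ) * ((a 0 * ∏ i' ∈ Finset.Icc 1 (k-1), ((m:ℝ) + a i'))⁻¹ *
          ∏ l ∈ Finset.range (j+1),
            ((b 0 * (∏ i' ∈ Finset.Icc 1 k, ((m:ℝ) + b i'))
              + ((n:ℝ)+(l:ℝ)) * (a 0 * ∏ i' ∈ Finset.Icc 1 (k-1), ((m:ℝ) + a i')))⁻¹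
              * (a 0 * ∏ i' ∈ Finset.Icc 1 (k-1), ((m:ℝ) + a i')))) := by
    intro m
    rw [hform m]
    have hA := hApos m
    have hB := hBpos m
    have hprod : ∏ l ∈ Finset.range (j+1),
        ((b 0 * (∏ i' ∈ Finset.Icc 1 k, ((m:ℝ) + b i'))
          + ((n:ℝ)+(l:ℝ)) * (a 0 * ∏ i' ∈ Finset.Icc 1 (k-1), ((m:ℝ) + a i')))⁻¹
          * (a 0 * ∏ i' ∈ Finset.Icc 1 (k-1), ((m:ℝ) + a i')))
        = ∏ l ∈ Finset.range (j+1), ((n:ℝ) +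
            (b 0 * ∏ i' ∈ Finset.Icc 1 k, ((m:ℝ) + b i'))
              / (a 0 * ∏ i' ∈ Finset.Icc 1 (k-1), ((m:ℝ) + a i')) + l)⁻¹ := by
      apply Finset.prod_congr rfl
      intro l _
      have h1 : b 0 * (∏ i' ∈ Finset.Icc 1 k, ((m:ℝ) + b i'))
          + ((n:ℝ)+(l:ℝ)) * (a 0 * ∏ i' ∈ Finset.Icc 1 (k-1), ((m:ℝ) + a i'))
          = ((n:ℝ) + (b 0 * ∏ i' ∈ Finset.Icc 1 k, ((m:ℝ) + b i'))
              / (a 0 * ∏ i' ∈ Finset.Icc 1 (k-1), ((m:ℝ) + a i')) + l)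
            * (a 0 * ∏ i' ∈ Finset.Icc 1 (k-1), ((m:ℝ) + a i')) := by
        rw [add_mul, add_mul, add_mul, div_mul_cancel₀ _ hA.ne']
        ring
      rw [h1, mul_inv, mul_assoc, inv_mul_cancel₀ (ne_of_gt hA), mul_one]
    rw [hprod, ← Finset.prod_inv_distrib]
    linear_combination ((a 0 * ∏ i' ∈ Finset.Icc 1 (k-1), ((m:ℝ) + a i'))⁻¹ *
      (j.factorial : ℝ) * (∏ l ∈ Finset.range (j+1), ((n:ℝ) +
            (b 0 * ∏ i' ∈ Finset.Icc 1 k, ((m:ℝ) + b i'))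
              / (a 0 * ∏ i' ∈ Finset.Icc 1 (k-1), ((m:ℝ) + a i')) + l)⁻¹)) * hsqj
  refine cm_congr (fun m => (hTeq m).symm) ?_ kk mm
  apply cm_smul (by positivity)
  apply cm_mul
  · apply cm_congr (f := fun m => (a 0)⁻¹ * ∏ i' ∈ Finset.Icc 1 (k-1), ((m:ℝ) + a i')⁻¹)
    · intro m
      rw [mul_inv, Finset.prod_inv_distrib]
    · exact cm_smul (by positivity) (cm_prod _ _ (fun i' hi' => cm_invLin (a i') (hapos i' hi')))
  · apply cm_prod
    intro l _
    exact cm_F k hk a b ha0 hb0 hapos hbpos hadist habdist hinter ((n:ℝ)+(l:ℝ)) (by positivity)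

end CMaux

/-- Main theorem, part (i), case `deg a = k−1 < k = deg b`:
if `b₁ ≤ a₁ ≤ b₂ ≤ a₂ ≤ … ≤ a_{k−1} ≤ b_k`, then the net `(m,n) ↦ 1/p(m,n)` with
`p(x,y) = b(x) + a(x)y` is joint completely monotone. -/
theorem main_theorem_part_i
    (k : ℕ) (hk : 1 < k) (a b : ℕ → ℝ)
    (ha0 : 0 < a 0) (hb0 : 0 < b 0)
    (hapos : ∀ i ∈ Finset.Icc 1 (k - 1), 0 < a i)
    (hbpos : ∀ j ∈ Finset.Icc 1 k, 0 < b j)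
    (hadist : ∀ i ∈ Finset.Icc 1 (k - 1), ∀ j ∈ Finset.Icc 1 (k - 1), i ≠ j → a i ≠ a j)
    (hbdist : ∀ i ∈ Finset.Icc 1 k, ∀ j ∈ Finset.Icc 1 k, i ≠ j → b i ≠ b j)
    (habdist : ∀ i ∈ Finset.Icc 1 (k - 1), ∀ j ∈ Finset.Icc 1 k, a i ≠ b j)
    (hinter : ∀ i ∈ Finset.Icc 1 (k - 1), b i ≤ a i ∧ a i ≤ b (i + 1)) :
    JointCM (fun m n : ℕ =>
      1 / ((b 0 * ∏ j ∈ Finset.Icc 1 k, ((m : ℝ) + b j)) +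
            (a 0 * ∏ j ∈ Finset.Icc 1 (k - 1), ((m : ℝ) + a j)) * n)) := by
  intro i j m n
  have hT := CMaux.cm_T k hk a b ha0 hb0 hapos hbpos hadist habdist hinter j n
  have e : (-1:ℝ)^(i+j) * ((Delta1^[i] (Delta2^[j] (fun m n : ℕ =>
      1 / ((b 0 * ∏ j ∈ Finset.Icc 1 k, ((m : ℝ) + b j)) +
            (a 0 * ∏ j ∈ Finset.Icc 1 (k - 1), ((m : ℝ) + a j)) * n)))) m n)
      = (-1:ℝ)^i * (DeltaSeq^[i] (fun m => (-1:ℝ)^j * (Delta2^[j] (fun m n : ℕ =>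
      1 / ((b 0 * ∏ j ∈ Finset.Icc 1 k, ((m : ℝ) + b j)) +
            (a 0 * ∏ j ∈ Finset.Icc 1 (k - 1), ((m : ℝ) + a j)) * n))) m n)) m := by
    rw [CMaux.slice1 i _ m n, CMaux.iter_smul i _ _ m, pow_add]
    ring
  rw [e]
  exact hT i m
end
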